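/- arXiv:2112.06786 — 7 statements merged into one kernel-verified Lean document; each statement's English description precedes it below -/
import Mathlib

section
/- For a complex square matrix A with no eigenvalues of zero real part, sign(A) commutes with A and sign(A) = A·(A²)^{-1/2}, where (A²)^{-1/2} is the inverse of the principal square root of A². -/
/-!
In the Jordan basis, `S * A = Z * diag(-J₁, J₂) * Z⁻¹` squares to `A * A`, has its spectrum in the
open right half-plane, and `S * S = 1`; so once square roots with spectrum in the right half-plane
are known to be unique, `(A²)^{1/2} = S * A` and `A * (S * A)⁻¹ = S`.

Uniqueness: if `X * X = Y * Y` then `X * (X - Y) = (X - Y) * (-Y)`. A solution `D` of the Sylvester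
equation `X * D = D * Y` satisfies `χ_X(X) * D = D * χ_X(Y)`, and the left side vanishes by
Cayley–Hamilton; when the spectra of `X` and `Y` are disjoint, `χ_X(Y)` is invertible by spectral
mapping, so `D = 0`.
-/

open Matrix

open Classical in
/-- The principal square root of a complex matrix: the unique square root whose
spectrum lies in the open right half-plane (junk value `0` if no such root exists). -/
noncomputable def principalSqrt {ι : Type*} [Fintype ι] [DecidableEq ι]
    (A : Matrix ι ι ℂ) : Matrix ι ι ℂ :=
  if h : ∃ X : Matrix ι ι ℂ, X * X = A ∧ ∀ μ ∈ spectrum ℂ X, 0 < μ.re then h.choose else 0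

/-- The matrix sign function, `sign A = A · ((A²)^{1/2})⁻¹`. -/
noncomputable def matrixSign {ι : Type*} [Fintype ι] [DecidableEq ι]
    (A : Matrix ι ι ℂ) : Matrix ι ι ℂ :=
  A * (principalSqrt (A * A))⁻¹

open Polynomial

theorem SemiconjBy.aeval {R A : Type*} [CommSemiring R] [Semiring A] [Algebra R A] {a x y : A}
    (h : SemiconjBy a x y) (p : R[X]) : SemiconjBy a (aeval x p) (aeval y p) := by
  induction p using Polynomial.induction_on' with
  | add p q hp hq => simpa only [map_add] using hp.add_right hq
  | monomial k r =>
    simpa only [aeval_monomial] using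
      SemiconjBy.mul_right (Algebra.commute_algebraMap_right r a) (h.pow_right k)

namespace Matrix

variable {m n : Type*} [Fintype m] [Fintype n] [DecidableEq m] [DecidableEq n]

theorem spectrum_fromBlocks_zero {R : Type*} [CommRing R] (B : Matrix m m R) (C : Matrix n n R) :
    spectrum R (fromBlocks B 0 0 C) = spectrum R B ∪ spectrum R C := by
  have hsub : ∀ μ : R, algebraMap R _ μ - fromBlocks B 0 0 C =
      fromBlocks (algebraMap R _ μ - B) 0 0 (algebraMap R _ μ - C) := fun μ => by
    ext (i | i) (j | j) <;> simp [algebraMap_matrix_apply]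
  ext μ
  simp only [spectrum.mem_iff, Set.mem_union, hsub, isUnit_iff_isUnit_det, det_fromBlocks_zero₂₁,
    IsUnit.mul_iff, not_and_or]

theorem eq_zero_of_mul_eq_mul_of_disjoint_spectrum {K : Type*} [Field K] [IsAlgClosed K]
    {X Y D : Matrix n n K} (h : X * D = D * Y) (hXY : Disjoint (spectrum K X) (spectrum K Y)) :
    D = 0 := by
  cases isEmpty_or_nonempty n
  · exact Subsingleton.elim _ _
  have hdeg : 0 < X.charpoly.degree := by
    rw [charpoly_degree_eq_dim]
    exact_mod_cast Fintype.card_pos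
  have hunit : IsUnit (aeval Y X.charpoly) := by
    refine spectrum.isUnit_of_zero_notMem K ?_
    rw [spectrum.map_polynomial_aeval_of_degree_pos _ _ hdeg]
    rintro ⟨μ, hμY, hμ⟩
    exact hXY.ne_of_mem (mem_spectrum_of_isRoot_charpoly hμ) hμY rfl
  have hD : D * aeval Y X.charpoly = 0 := by
    rw [(SemiconjBy.aeval h.symm X.charpoly).eq, aeval_self_charpoly, zero_mul]
  exact hunit.mul_left_eq_zero.mp hD

theorem eq_of_mul_self_eq_of_re_pos {X Y : Matrix n n ℂ} (h : X * X = Y * Y)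
    (hX : ∀ μ ∈ spectrum ℂ X, 0 < μ.re) (hY : ∀ μ ∈ spectrum ℂ Y, 0 < μ.re) : X = Y := by
  have hsylv : X * (X - Y) = (X - Y) * -Y := by
    simp only [mul_sub, sub_mul, mul_neg, h, neg_sub]
  refine sub_eq_zero.mp (eq_zero_of_mul_eq_mul_of_disjoint_spectrum hsylv ?_)
  rw [← spectrum.neg_eq, Set.disjoint_left]
  intro μ hμX hμY
  have hμ := hY (-μ) hμY
  rw [Complex.neg_re] at hμ
  linarith [hX μ hμX]

end Matrix

section principalSqrt

variable {ι : Type*} [Fintype ι] [DecidableEq ι]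

theorem principalSqrt_eq {A X : Matrix ι ι ℂ} (hXA : X * X = A)
    (hX : ∀ μ ∈ spectrum ℂ X, 0 < μ.re) : principalSqrt A = X := by
  have hex : ∃ X : Matrix ι ι ℂ, X * X = A ∧ ∀ μ ∈ spectrum ℂ X, 0 < μ.re := ⟨X, hXA, hX⟩
  rw [principalSqrt, dif_pos hex]
  exact eq_of_mul_self_eq_of_re_pos (hex.choose_spec.1.trans hXA.symm) hex.choose_spec.2 hX

theorem mul_inv_principalSqrt_mul_self {A S : Matrix ι ι ℂ} (hS : S * S = 1) (hSA : Commute S A)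
    (hSA_re : ∀ μ ∈ spectrum ℂ (S * A), 0 < μ.re) : A * (principalSqrt (A * A))⁻¹ = S := by
  have hsq : S * A * (S * A) = A * A := by
    rw [hSA.symm.mul_mul_mul_comm, hS, one_mul]
  have hunit : IsUnit (S * A).det :=
    (isUnit_iff_isUnit_det _).mp <| spectrum.isUnit_of_zero_notMem ℂ fun h0 => by
      simpa using hSA_re 0 h0
  calc A * (principalSqrt (A * A))⁻¹ = S * (S * A) * (S * A)⁻¹ := by
        rw [principalSqrt_eq hsq hSA_re, ← mul_assoc, hS, one_mul]
    _ = S := mul_nonsing_inv_cancel_right _ _ hunit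

end principalSqrt

/-- For `A` with no eigenvalues of zero real part (defined via the Jordan form as
`Z·diag(−I,I)·Z⁻¹`), the sign `S` commutes with `A` and `S = A·(A²)^{-1/2}`. -/
theorem matrix_sign_commutes_and_eq {p q : ℕ}
    (Z : Matrix (Fin p ⊕ Fin q) (Fin p ⊕ Fin q) ℂ) (hZ : IsUnit Z)
    (J₁ : Matrix (Fin p) (Fin p) ℂ) (J₂ : Matrix (Fin q) (Fin q) ℂ)
    (hJ₁ : ∀ μ ∈ spectrum ℂ J₁, μ.re < 0)
    (hJ₂ : ∀ μ ∈ spectrum ℂ J₂, 0 < μ.re)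
    (A S : Matrix (Fin p ⊕ Fin q) (Fin p ⊕ Fin q) ℂ)
    (hA : A = Z * Matrix.fromBlocks J₁ 0 0 J₂ * Z⁻¹)
    (hS : S = Z * Matrix.fromBlocks (-1) 0 0 1 * Z⁻¹) :
    S * A = A * S ∧ S = A * (principalSqrt (A * A))⁻¹ := by
  set conj := MulSemiringAction.toAlgEquiv ℂ (Matrix (Fin p ⊕ Fin q) (Fin p ⊕ Fin q) ℂ)
    (ConjAct.toConjAct hZ.unit)
  have hconj : ∀ M, conj M = Z * M * Z⁻¹ := fun M => by
    simp [conj, ConjAct.units_smul_def, coe_units_inv]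
  rw [← hconj] at hA hS
  have hSA : S * A = conj (fromBlocks (-J₁) 0 0 J₂) := by
    rw [hS, hA, ← map_mul, fromBlocks_multiply]
    simp
  have hAS : A * S = conj (fromBlocks (-J₁) 0 0 J₂) := by
    rw [hS, hA, ← map_mul, fromBlocks_multiply]
    simp
  have hcomm : Commute S A := hSA.trans hAS.symm
  have hSS : S * S = 1 := by
    rw [hS, ← map_mul, fromBlocks_multiply]
    simp [fromBlocks_one]
  have hSA_re : ∀ μ ∈ spectrum ℂ (S * A), 0 < μ.re := by
    rw [hSA, AlgEquiv.spectrum_eq, spectrum_fromBlocks_zero, ← spectrum.neg_eq]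
    rintro μ (hμ | hμ)
    · simpa using hJ₁ (-μ) hμ
    · exact hJ₂ μ hμ
  exact ⟨hcomm, (mul_inv_principalSqrt_mul_self hSS hcomm hSA_re).symm⟩
end

section
/- Let A, B ∈ ℂ^{n×n} with AB having no eigenvalues on (-∞,0]. Then sign of the 2n×2n block matrix [[0, A],[B, 0]] equals [[0, C],[C⁻¹, 0]], where C = A·(BA)^{-1/2}. -/
open Matrix

namespace MatrixSignAux

open Polynomial

/-! ### Complex principal square root of scalars -/

noncomputable def csqrt (z : ℂ) : ℂ := z ^ (1/2 : ℂ)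

lemma csqrt_mul_self {z : ℂ} (hz : z ≠ 0) : csqrt z * csqrt z = z := by
  rw [csqrt, ← Complex.cpow_add _ _ hz]
  norm_num

lemma csqrt_ne_zero {z : ℂ} (hz : z ≠ 0) : csqrt z ≠ 0 := by
  intro h
  apply hz
  rw [← csqrt_mul_self hz, h, mul_zero]

lemma csqrt_re_pos {z : ℂ} (hz : ¬ (z.im = 0 ∧ z.re ≤ 0)) : 0 < (csqrt z).re := by
  have hz0 : z ≠ 0 := by
    rintro rfl
    exact hz ⟨rfl, le_refl 0⟩
  rw [csqrt, Complex.cpow_def_of_ne_zero hz0, Complex.exp_re]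
  apply mul_pos (Real.exp_pos _)
  have him : (Complex.log z * (1/2)).im = z.arg / 2 := by
    simp [Complex.mul_im, Complex.log_im]
    ring
  rw [him]
  apply Real.cos_pos_of_mem_Ioo
  constructor
  · have := Complex.neg_pi_lt_arg z
    linarith
  · have h1 : |z.arg| ≤ Real.pi := Complex.abs_arg_le_pi z
    have h2 : z.arg ≠ Real.pi := by
      intro hpi
      rcases Complex.arg_eq_pi_iff.mp hpi with ⟨hre, him0⟩
      exact hz ⟨him0, hre.le⟩
    have : z.arg < Real.pi := lt_of_le_of_ne (abs_le.mp h1).2 h2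
    linarith

/-! ### Spectrum and characteristic polynomial -/

variable {ι : Type*} [Fintype ι] [DecidableEq ι]

lemma eval_charpoly' (M : Matrix ι ι ℂ) (μ : ℂ) :
    (M.charpoly).eval μ = (Matrix.diagonal (fun _ => μ) - M).det := by
  rw [Matrix.charpoly, ← Polynomial.coe_evalRingHom, RingHom.map_det]
  congr 1
  ext i j
  by_cases h : i = j <;>
    simp [charmatrix_apply, Matrix.diagonal, h, Matrix.map_apply, Matrix.sub_apply]

lemma algebraMap_eq (μ : ℂ) :
    algebraMap ℂ (Matrix ι ι ℂ) μ = Matrix.diagonal (fun _ => μ) := by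
  ext i j
  by_cases h : i = j <;> simp [Matrix.algebraMap_matrix_apply, h]

lemma mem_spectrum_iff' (M : Matrix ι ι ℂ) (μ : ℂ) :
    μ ∈ spectrum ℂ M ↔ M.charpoly.IsRoot μ := by
  rw [spectrum.mem_iff, algebraMap_eq, Matrix.isUnit_iff_isUnit_det, IsRoot.def, eval_charpoly',
    isUnit_iff_ne_zero, not_ne_iff]

lemma spectrum_nonempty [Nonempty ι] (M : Matrix ι ι ℂ) : (spectrum ℂ M).Nonempty := by
  have hdeg : M.charpoly.degree ≠ 0 := by
    intro h
    have := Polynomial.natDegree_eq_zero_iff_degree_le_zero.mpr h.le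
    rw [Matrix.charpoly_natDegree_eq_dim] at this
    exact Fintype.card_pos.ne' this
  obtain ⟨μ, hμ⟩ := IsAlgClosed.exists_root M.charpoly hdeg
  exact ⟨μ, (mem_spectrum_iff' M μ).mpr hμ⟩

/-! ### Uniqueness of the principal square root -/

/-- If no root of `p` is in the spectrum of `T`, then `p(T)` is a unit. -/
lemma isUnit_aeval (T : Matrix ι ι ℂ) (p : ℂ[X]) (hp : p ≠ 0)
    (h : ∀ r : ℂ, p.IsRoot r → r ∉ spectrum ℂ T) : IsUnit (aeval T p) := by
  suffices H : ∀ n : ℕ, ∀ p : ℂ[X], p.natDegree = n → p ≠ 0 →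
      (∀ r : ℂ, p.IsRoot r → r ∉ spectrum ℂ T) → IsUnit (aeval T p) from H _ p rfl hp h
  intro n
  induction n using Nat.strong_induction_on with
  | _ n ih =>
  intro p hn hp h
  rcases eq_or_ne n 0 with rfl | hne
  · obtain ⟨c, rfl⟩ := Polynomial.natDegree_eq_zero.mp hn
    have hc : c ≠ 0 := fun hc => hp (by simp [hc])
    rw [aeval_C]
    exact (isUnit_iff_ne_zero.mpr hc).map (algebraMap ℂ (Matrix ι ι ℂ))
  · have hdeg : p.degree ≠ 0 := fun hd =>
      hne (hn ▸ Polynomial.natDegree_eq_zero_iff_degree_le_zero.mpr hd.le)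
    obtain ⟨r, hr⟩ := IsAlgClosed.exists_root p hdeg
    obtain ⟨q, rfl⟩ := Polynomial.dvd_iff_isRoot.mpr hr
    have hq : q ≠ 0 := right_ne_zero_of_mul hp
    have hdq : q.natDegree < n := by
      rw [← hn, Polynomial.natDegree_mul (Polynomial.X_sub_C_ne_zero r) hq,
        Polynomial.natDegree_X_sub_C]
      omega
    have hu1 : IsUnit (aeval T (X - C r)) := by
      have hrs : r ∉ spectrum ℂ T := h r (by simp [IsRoot, Polynomial.eval_mul])
      rw [spectrum.mem_iff, not_not] at hrs
      have heq : aeval T (X - C r) = -(algebraMap ℂ (Matrix ι ι ℂ) r - T) := by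
        rw [map_sub, Polynomial.aeval_X, Polynomial.aeval_C, neg_sub]
      rw [heq]
      exact hrs.neg
    have hu2 : IsUnit (aeval T q) := by
      refine ih q.natDegree hdq q rfl hq (fun x hx => h x ?_)
      simp [IsRoot, Polynomial.eval_mul, hx.eq_zero]
    rw [_root_.map_mul]
    exact hu1.mul hu2

/-- Uniqueness of the square root with spectrum in the open right half-plane. -/
lemma sqrt_unique {S T : Matrix ι ι ℂ} (h : S * S = T * T)
    (hS : ∀ μ ∈ spectrum ℂ S, 0 < μ.re) (hT : ∀ μ ∈ spectrum ℂ T, 0 < μ.re) :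
    S = T := by
  set Z := S - T with hZdef
  have hcomm : S * Z = Z * (-T) := by
    simp only [hZdef, mul_sub, sub_mul, mul_neg, h]
    abel
  have hpow : ∀ k : ℕ, S ^ k * Z = Z * (-T) ^ k := by
    intro k
    induction k with
    | zero => simp
    | succ k ihk =>
        rw [pow_succ', mul_assoc, ihk, ← mul_assoc, hcomm, mul_assoc, ← pow_succ']
  have key : ∀ p : ℂ[X], aeval S p * Z = Z * aeval (-T) p := by
    intro p
    induction p using Polynomial.induction_on' with
    | add p q hp hq => rw [map_add, map_add, add_mul, mul_add, hp, hq]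
    | monomial k a =>
        rw [Polynomial.aeval_monomial, Polynomial.aeval_monomial,
          Algebra.algebraMap_eq_smul_one, smul_mul_assoc, one_mul, smul_mul_assoc,
          smul_mul_assoc, one_mul, mul_smul_comm, hpow]
  have hz0 : Z * aeval (-T) S.charpoly = 0 := by
    rw [← key, Matrix.aeval_self_charpoly, zero_mul]
  have hunit : IsUnit (aeval (-T) S.charpoly) := by
    refine isUnit_aeval (-T) _ S.charpoly_monic.ne_zero (fun r hr hmem => ?_)
    have hrS : 0 < r.re := hS r ((mem_spectrum_iff' S r).mpr hr)
    rw [spectrum.mem_iff] at hmem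
    apply hmem
    have heq : algebraMap ℂ (Matrix ι ι ℂ) r - (-T) = -(algebraMap ℂ (Matrix ι ι ℂ) (-r) - T) := by
      rw [map_neg]; abel
    rw [heq]
    rw [IsUnit.neg_iff]
    have hns : (-r) ∉ spectrum ℂ T := fun hc => by
      have := hT _ hc; simp only [Complex.neg_re] at this; linarith
    rwa [spectrum.mem_iff, not_not] at hns
  obtain ⟨u, hu⟩ := hunit
  have hZ0 : Z = 0 := by
    have h1 : Z * (u * (u⁻¹ : (Matrix ι ι ℂ)ˣ)) = 0 := by
      rw [← mul_assoc, hu, hz0, zero_mul]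
    rwa [u.mul_inv, mul_one] at h1
  rw [← sub_eq_zero]
  exact hZ0

/-! ### Existence of the principal square root -/

lemma exists_sqrt [Nonempty ι] (M : Matrix ι ι ℂ)
    (hM : ∀ μ ∈ spectrum ℂ M, ¬ (μ.im = 0 ∧ μ.re ≤ 0)) :
    ∃ S : Matrix ι ι ℂ, S * S = M ∧ ∀ μ ∈ spectrum ℂ S, 0 < μ.re := by
  classical
  set p := M.charpoly with hpdef
  have hmono : p.Monic := M.charpoly_monic
  have hp0 : p ≠ 0 := hmono.ne_zero
  set s : Finset ℂ := p.roots.toFinset with hsdef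
  have hroot_spec : ∀ a ∈ s, a ∈ spectrum ℂ M := by
    intro a ha
    rw [hsdef, Multiset.mem_toFinset, mem_roots hp0] at ha
    exact (mem_spectrum_iff' M a).mpr ha
  have hs0 : ∀ a ∈ s, a ≠ 0 := by
    intro a ha h0
    exact hM a (hroot_spec a ha) (by simp [h0])
  set r : ℂ[X] := ∏ a ∈ s, (X - C a) with hrdef
  have hcop : (↑s : Set ℂ).Pairwise (Function.onFun IsCoprime fun a : ℂ => X - C a) := by
    intro a _ b _ hab
    exact Polynomial.pairwise_coprime_X_sub_C Function.injective_id hab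
  have hensel : ∀ k : ℕ, ∃ q : ℂ[X],
      (∀ a ∈ s, q.eval a = csqrt a) ∧ r ^ (k + 1) ∣ q ^ 2 - X := by
    intro k
    induction k with
    | zero =>
      refine ⟨Lagrange.interpolate s id csqrt, fun a ha => ?_, ?_⟩
      · exact Lagrange.eval_interpolate_at_node csqrt (Set.injOn_id _) ha
      · rw [pow_one, hrdef]
        refine Finset.prod_dvd_of_coprime hcop (fun a ha => ?_)
        rw [Polynomial.dvd_iff_isRoot]
        have := Lagrange.eval_interpolate_at_node csqrt (v := id) (Set.injOn_id (s : Set ℂ)) ha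
        simp only [IsRoot, eval_sub, eval_pow, eval_X, id] at this ⊢
        rw [this, sq, csqrt_mul_self (hs0 a ha), sub_self]
    | succ k ihk =>
      obtain ⟨q, hq, hdvd⟩ := ihk
      have hcop2 : IsCoprime r (2 * q) := by
        rw [hrdef]
        refine IsCoprime.prod_left (fun a ha => ?_)
        rw [(Polynomial.irreducible_X_sub_C a).coprime_iff_not_dvd, Polynomial.dvd_iff_isRoot]
        simp only [IsRoot, eval_mul, eval_ofNat]
        intro hc
        rcases mul_eq_zero.mp hc with h2 | h2
        · norm_num at h2
        · rw [hq a ha] at h2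
          exact csqrt_ne_zero (hs0 a ha) h2
      obtain ⟨u, v, huv⟩ := hcop2
      refine ⟨q + v * (X - q ^ 2), fun a ha => ?_, ?_⟩
      · have h1 : (X - q ^ 2).eval a = 0 := by
          simp only [eval_sub, eval_pow, eval_X, hq a ha]
          rw [sq, csqrt_mul_self (hs0 a ha), sub_self]
        simp [eval_add, eval_mul, h1, hq a ha]
      · have expand : (q + v * (X - q ^ 2)) ^ 2 - X =
            (q ^ 2 - X) * (1 - 2 * q * v) + v ^ 2 * (q ^ 2 - X) ^ 2 := by ring
        have h2qv : 1 - 2 * q * v = u * r := by linear_combination -huv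
        rw [expand, h2qv]
        apply dvd_add
        · have hpw : r ^ (k + 2) = r ^ (k + 1) * r := by ring
          rw [hpw]
          calc r ^ (k + 1) * r ∣ (q ^ 2 - X) * r := mul_dvd_mul_right hdvd r
            _ ∣ (q ^ 2 - X) * (u * r) := mul_dvd_mul_left _ (dvd_mul_left r u)
        · have h1 : r ^ (k + 2) ∣ (q ^ 2 - X) ^ 2 := by
            calc r ^ (k + 2) ∣ r ^ (2 * (k + 1)) := pow_dvd_pow r (by omega)
              _ = (r ^ (k + 1)) ^ 2 := by ring
              _ ∣ (q ^ 2 - X) ^ 2 := pow_dvd_pow_of_dvd hdvd 2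
          exact h1.mul_left _
  obtain ⟨q, hq, hdvd⟩ := hensel (Fintype.card ι)
  have hchar : p ∣ r ^ (Fintype.card ι + 1) := by
    have hcard : Multiset.card p.roots = p.natDegree :=
      (Polynomial.splits_iff_card_roots).mp (IsAlgClosed.splits p)
    have hfact : (p.roots.map fun a => X - C a).prod = p :=
      prod_multiset_X_sub_C_of_monic_of_roots_card_eq hmono hcard
    have hle : p.roots ≤ (Fintype.card ι + 1) • p.roots.dedup := by
      rw [Multiset.le_iff_count]
      intro a
      rw [Multiset.count_nsmul, Multiset.count_dedup]
      by_cases ha : a ∈ p.roots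
      · rw [if_pos ha, mul_one]
        calc Multiset.count a p.roots ≤ Multiset.card p.roots := Multiset.count_le_card a _
          _ = p.natDegree := hcard
          _ ≤ Fintype.card ι + 1 := by
              rw [hpdef, Matrix.charpoly_natDegree_eq_dim]; omega
      · rw [if_neg ha, mul_zero, Multiset.count_eq_zero_of_notMem ha]
    have hr_eq : r = (p.roots.dedup.map fun a => X - C a).prod := by
      rw [hrdef, Finset.prod_eq_multiset_prod, hsdef, Multiset.toFinset_val]
    calc p = (p.roots.map fun a => X - C a).prod := hfact.symm
      _ ∣ (((Fintype.card ι + 1) • p.roots.dedup).map fun a => X - C a).prod :=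
          Multiset.prod_dvd_prod_of_le (Multiset.map_le_map hle)
      _ = r ^ (Fintype.card ι + 1) := by
          rw [Multiset.map_nsmul, Multiset.prod_nsmul, hr_eq]
  refine ⟨aeval M q, ?_, ?_⟩
  · have hz : aeval M (q ^ 2 - X) = 0 := by
      obtain ⟨c, hc⟩ := hchar.trans hdvd
      rw [hc, _root_.map_mul, hpdef, Matrix.aeval_self_charpoly, zero_mul]
    rw [map_sub, map_pow, aeval_X, sub_eq_zero] at hz
    rw [← sq]
    exact hz
  · rw [spectrum.map_polynomial_aeval_of_nonempty M q (spectrum_nonempty M)]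
    rintro μ ⟨a, ha, rfl⟩
    have has : a ∈ s := by
      rw [hsdef, Multiset.mem_toFinset, mem_roots hp0]
      exact (mem_spectrum_iff' M a).mp ha
    show 0 < (eval a q).re
    rw [hq a has]
    exact csqrt_re_pos (hM a ha)

/-! ### Basic properties of `principalSqrt` -/

lemma principalSqrt_eq {M S : Matrix ι ι ℂ} (h1 : S * S = M)
    (h2 : ∀ μ ∈ spectrum ℂ S, 0 < μ.re) : principalSqrt M = S := by
  have hex : ∃ X : Matrix ι ι ℂ, X * X = M ∧ ∀ μ ∈ spectrum ℂ X, 0 < μ.re := ⟨S, h1, h2⟩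
  rw [principalSqrt, dif_pos hex]
  exact sqrt_unique (hex.choose_spec.1.trans h1.symm) hex.choose_spec.2 h2

lemma spec_fromBlocks_subset (P Q : Matrix ι ι ℂ) {μ : ℂ}
    (h : μ ∈ spectrum ℂ (Matrix.fromBlocks P 0 0 Q)) :
    μ ∈ spectrum ℂ P ∪ spectrum ℂ Q := by
  by_contra hc
  rw [Set.mem_union] at hc
  push_neg at hc
  obtain ⟨h1, h2⟩ := hc
  rw [spectrum.mem_iff, not_not] at h1 h2
  rw [spectrum.mem_iff] at h
  apply h
  have heq : algebraMap ℂ (Matrix (ι ⊕ ι) (ι ⊕ ι) ℂ) μ - Matrix.fromBlocks P 0 0 Q =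
      Matrix.fromBlocks (algebraMap ℂ (Matrix ι ι ℂ) μ - P) 0 0
        (algebraMap ℂ (Matrix ι ι ℂ) μ - Q) := by
    rw [algebraMap_eq]
    have hdiag : (Matrix.diagonal (fun _ : ι ⊕ ι => μ)) =
        Matrix.fromBlocks (Matrix.diagonal (fun _ : ι => μ)) 0 0
          (Matrix.diagonal (fun _ : ι => μ)) := by
      rw [Matrix.fromBlocks_diagonal]
      congr 1
      ext (i | i) <;> rfl
    rw [hdiag]
    ext (i | i) (j | j) <;>
      simp [Matrix.fromBlocks, Matrix.sub_apply, algebraMap_eq]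
  rw [heq, Matrix.isUnit_iff_isUnit_det, Matrix.det_fromBlocks_zero₂₁]
  rw [Matrix.isUnit_iff_isUnit_det] at h1 h2
  exact h1.mul h2

lemma spec_conj_subset (P A : Matrix ι ι ℂ) (hA : IsUnit A.det) {μ : ℂ}
    (h : μ ∈ spectrum ℂ (A * P * A⁻¹)) : μ ∈ spectrum ℂ P := by
  by_contra hc
  rw [spectrum.mem_iff, not_not] at hc
  rw [spectrum.mem_iff] at h
  apply h
  have h1 : A * algebraMap ℂ (Matrix ι ι ℂ) μ * A⁻¹ = algebraMap ℂ (Matrix ι ι ℂ) μ := by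
    rw [← Algebra.commutes, mul_assoc, Matrix.mul_nonsing_inv A hA, mul_one]
  have heq : algebraMap ℂ (Matrix ι ι ℂ) μ - A * P * A⁻¹ =
      A * (algebraMap ℂ (Matrix ι ι ℂ) μ - P) * A⁻¹ := by
    rw [mul_sub, sub_mul, h1]
  rw [heq, Matrix.isUnit_iff_isUnit_det, Matrix.det_mul, Matrix.det_mul]
  rw [Matrix.isUnit_iff_isUnit_det] at hc
  exact (hA.mul hc).mul (Matrix.isUnit_nonsing_inv_det A hA)

end MatrixSignAux

/-- For `A, B` square with `AB` having no eigenvalues on `(-∞,0]`,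
`sign [[0,A],[B,0]] = [[0,C],[C⁻¹,0]]` with `C = A·(BA)^{-1/2}`. -/
theorem matrix_sign_block {n : ℕ} (A B : Matrix (Fin n) (Fin n) ℂ)
    (hAB : ∀ μ ∈ spectrum ℂ (A * B), ¬ (μ.im = 0 ∧ μ.re ≤ 0)) :
    matrixSign (Matrix.fromBlocks 0 A B 0) =
      Matrix.fromBlocks 0 (A * (principalSqrt (B * A))⁻¹)
        (A * (principalSqrt (B * A))⁻¹)⁻¹ 0 := by
  open MatrixSignAux in
  rcases Nat.eq_zero_or_pos n with rfl | hn
  · exact Subsingleton.elim _ _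
  haveI : Nonempty (Fin n) := ⟨⟨0, hn⟩⟩
  -- invertibility facts
  have h0AB : (0 : ℂ) ∉ spectrum ℂ (A * B) := fun h => hAB 0 h (by simp)
  have hABu : IsUnit (A * B) := by
    rw [spectrum.zero_mem_iff, not_not] at h0AB
    exact h0AB
  have hdet : IsUnit A.det ∧ IsUnit B.det := by
    rw [Matrix.isUnit_iff_isUnit_det, Matrix.det_mul] at hABu
    exact ⟨isUnit_of_mul_isUnit_left hABu, isUnit_of_mul_isUnit_right hABu⟩
  obtain ⟨hdetA, hdetB⟩ := hdet
  have hBAu : IsUnit (B * A) := by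
    rw [Matrix.isUnit_iff_isUnit_det, Matrix.det_mul]
    exact hdetB.mul hdetA
  have hBA : ∀ μ ∈ spectrum ℂ (B * A), ¬ (μ.im = 0 ∧ μ.re ≤ 0) := by
    intro μ hμ
    rcases eq_or_ne μ 0 with rfl | hμ0
    · exact absurd hBAu ((spectrum.zero_mem_iff ℂ).mp hμ)
    · have hmem : μ ∈ spectrum ℂ (B * A) \ {0} := ⟨hμ, hμ0⟩
      rw [spectrum.nonzero_mul_comm] at hmem
      exact hAB μ hmem.1
  obtain ⟨S₁, hS₁, hS₁spec⟩ := MatrixSignAux.exists_sqrt (A * B) hAB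
  obtain ⟨S₂, hS₂, hS₂spec⟩ := MatrixSignAux.exists_sqrt (B * A) hBA
  have hdS₁ : IsUnit S₁.det := by
    have hdd : S₁.det * S₁.det = (A * B).det := by rw [← Matrix.det_mul, hS₁]
    rw [Matrix.isUnit_iff_isUnit_det] at hABu
    rw [← hdd] at hABu
    exact isUnit_of_mul_isUnit_left hABu
  have hdS₂ : IsUnit S₂.det := by
    have hdd : S₂.det * S₂.det = (B * A).det := by rw [← Matrix.det_mul, hS₂]
    rw [Matrix.isUnit_iff_isUnit_det] at hBAu
    rw [← hdd] at hBAu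
    exact isUnit_of_mul_isUnit_left hBAu
  -- similarity : S₁ = A * S₂ * A⁻¹
  have hsim : A * S₂ * A⁻¹ = S₁ := by
    apply MatrixSignAux.sqrt_unique ?_ ?_ hS₁spec
    · rw [hS₁]
      calc A * S₂ * A⁻¹ * (A * S₂ * A⁻¹) = A * S₂ * (A⁻¹ * A) * S₂ * A⁻¹ := by
            simp only [Matrix.mul_assoc]
        _ = A * (S₂ * S₂) * A⁻¹ := by
            rw [Matrix.nonsing_inv_mul A hdetA]
            simp only [Matrix.mul_one, Matrix.mul_assoc]
        _ = A * (B * A) * A⁻¹ := by rw [hS₂]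
        _ = A * B := by
            rw [← Matrix.mul_assoc, Matrix.mul_assoc (A * B), Matrix.mul_nonsing_inv A hdetA,
              Matrix.mul_one]
    · intro μ hμ
      exact hS₂spec μ (MatrixSignAux.spec_conj_subset S₂ A hdetA hμ)
  have hS₁inv : S₁⁻¹ = A * S₂⁻¹ * A⁻¹ := by
    apply Matrix.inv_eq_left_inv
    rw [← hsim]
    calc A * S₂⁻¹ * A⁻¹ * (A * S₂ * A⁻¹)
        = A * S₂⁻¹ * (A⁻¹ * A) * S₂ * A⁻¹ := by simp only [Matrix.mul_assoc]
      _ = A * (S₂⁻¹ * S₂) * A⁻¹ := by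
          rw [Matrix.nonsing_inv_mul A hdetA]
          simp only [Matrix.mul_one, Matrix.mul_assoc]
      _ = 1 := by
          rw [Matrix.nonsing_inv_mul S₂ hdS₂, Matrix.mul_one, Matrix.mul_nonsing_inv A hdetA]
  -- principal square roots
  have hP2 : principalSqrt (B * A) = S₂ := MatrixSignAux.principalSqrt_eq hS₂ hS₂spec
  have hMM : Matrix.fromBlocks (0 : Matrix (Fin n) (Fin n) ℂ) A B 0 *
      Matrix.fromBlocks 0 A B 0 = Matrix.fromBlocks (A * B) 0 0 (B * A) := by
    rw [Matrix.fromBlocks_multiply]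
    congr 1 <;> simp
  have hD : principalSqrt (Matrix.fromBlocks (0 : Matrix (Fin n) (Fin n) ℂ) A B 0 *
      Matrix.fromBlocks 0 A B 0) = Matrix.fromBlocks S₁ 0 0 S₂ := by
    rw [hMM]
    apply MatrixSignAux.principalSqrt_eq
    · rw [Matrix.fromBlocks_multiply]
      congr 1 <;> simp [hS₁, hS₂]
    · intro μ hμ
      rcases MatrixSignAux.spec_fromBlocks_subset S₁ S₂ hμ with h | h
      · exact hS₁spec μ h
      · exact hS₂spec μ h
  have hDinv : (Matrix.fromBlocks S₁ 0 0 S₂)⁻¹ = Matrix.fromBlocks S₁⁻¹ 0 0 S₂⁻¹ := by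
    apply Matrix.inv_eq_left_inv
    rw [Matrix.fromBlocks_multiply]
    have e1 : S₁⁻¹ * S₁ = 1 := Matrix.nonsing_inv_mul S₁ hdS₁
    have e2 : S₂⁻¹ * S₂ = 1 := Matrix.nonsing_inv_mul S₂ hdS₂
    rw [← Matrix.fromBlocks_one (l := Fin n) (m := Fin n) (α := ℂ)]
    congr 1 <;> simp [e1, e2]
  -- the inverse identity
  have hkey : (A * S₂⁻¹)⁻¹ = B * S₁⁻¹ := by
    apply Matrix.inv_eq_right_inv
    rw [hS₁inv]
    calc A * S₂⁻¹ * (B * (A * S₂⁻¹ * A⁻¹))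
        = A * (S₂⁻¹ * (B * A) * S₂⁻¹) * A⁻¹ := by simp only [Matrix.mul_assoc]
      _ = A * (S₂⁻¹ * (S₂ * S₂) * S₂⁻¹) * A⁻¹ := by rw [hS₂]
      _ = 1 := by
          rw [← Matrix.mul_assoc S₂⁻¹, Matrix.nonsing_inv_mul S₂ hdS₂, Matrix.one_mul,
            Matrix.mul_nonsing_inv S₂ hdS₂, Matrix.mul_one, Matrix.mul_nonsing_inv A hdetA]
  -- assemble
  rw [matrixSign, hD, hDinv, hP2, Matrix.fromBlocks_multiply, hkey]
  congr 1 <;> simp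
end

section
/- Let A ∈ ℂ^{n×n} have no eigenvalues on (-∞,0]. Then sign([[0, A],[I, 0]]) = [[0, A^{1/2}],[A^{-1/2}, 0]]. -/
open Matrix

open Polynomial

/-- principal complex square root via exp/log -/
noncomputable def csqrt (z : ℂ) : ℂ := Complex.exp (Complex.log z / 2)

lemma csqrt_ne_zero (z : ℂ) : csqrt z ≠ 0 := Complex.exp_ne_zero _

lemma csqrt_mul_self {z : ℂ} (hz : z ≠ 0) : csqrt z * csqrt z = z := by
  rw [csqrt, ← Complex.exp_add, show Complex.log z / 2 + Complex.log z / 2 = Complex.log z by ring]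
  exact Complex.exp_log hz

lemma csqrt_re_pos {z : ℂ} (hz : ¬ (z.im = 0 ∧ z.re ≤ 0)) : 0 < (csqrt z).re := by
  have hz0 : z ≠ 0 := by rintro rfl; exact hz ⟨rfl, le_refl 0⟩
  rw [csqrt, Complex.exp_re]
  apply mul_pos (Real.exp_pos _)
  have him : (Complex.log z / 2).im = z.arg / 2 := by
    rw [show (2:ℂ) = ((2:ℝ):ℂ) by norm_num, Complex.div_ofReal_im, Complex.log_im]
  rw [him]
  apply Real.cos_pos_of_mem_Ioo
  constructor
  · have := Complex.neg_pi_lt_arg z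
    linarith
  · have h1 : z.arg ≤ Real.pi := Complex.arg_le_pi z
    have h2 : z.arg ≠ Real.pi := by
      intro h
      rcases Complex.arg_eq_pi_iff.mp h with ⟨hre, him0⟩
      exact hz ⟨him0, hre.le⟩
    have : z.arg < Real.pi := lt_of_le_of_ne h1 h2
    linarith

/-- spectrum of a complex matrix = roots of charpoly -/
lemma Matrix.mem_spectrum_iff_isRoot {ι : Type*} [Fintype ι] [DecidableEq ι]
    (A : Matrix ι ι ℂ) (μ : ℂ) : μ ∈ spectrum ℂ A ↔ A.charpoly.IsRoot μ := by
  rw [spectrum.mem_iff, IsRoot, Matrix.charpoly, _root_.eval_det, matPolyEquiv_charmatrix]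
  rw [eval_sub, eval_X, eval_C]
  have : (algebraMap ℂ (Matrix ι ι ℂ)) μ = Matrix.scalar ι μ := rfl
  rw [this, Matrix.isUnit_iff_isUnit_det, isUnit_iff_ne_zero, not_not]

/-- If no root of `p` lies in the spectrum of `X`, and `p ≠ 0`, then `p(X)` is invertible. -/
lemma aeval_isUnit_of_roots_not_mem {ι : Type*} [Fintype ι] [DecidableEq ι]
    (X : Matrix ι ι ℂ) (p : ℂ[X]) (hp : p ≠ 0)
    (h : ∀ r : ℂ, p.IsRoot r → r ∉ spectrum ℂ X) : IsUnit (Polynomial.aeval X p) := by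
  have H : ∀ n (p : ℂ[X]), p.natDegree = n → p ≠ 0 →
      (∀ r : ℂ, p.IsRoot r → r ∉ spectrum ℂ X) → IsUnit (Polynomial.aeval X p) := by
    intro n
    induction n using Nat.strong_induction_on with
    | _ n ih =>
      intro p hn hp h
      by_cases hdeg : p.natDegree = 0
      · obtain ⟨c, rfl⟩ := Polynomial.natDegree_eq_zero.mp hdeg
        have hc : c ≠ 0 := fun hc => hp (by simp [hc])
        simpa using (IsUnit.map (algebraMap ℂ (Matrix ι ι ℂ)) (isUnit_iff_ne_zero.mpr hc))
      · have hd : 0 < p.degree := by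
          rw [← Polynomial.natDegree_pos_iff_degree_pos]; omega
        obtain ⟨r, hr⟩ := Complex.exists_root hd
        obtain ⟨q, rfl⟩ := Polynomial.dvd_iff_isRoot.mpr hr
        have hq : q ≠ 0 := fun hq => hp (by simp [hq])
        have hnd : q.natDegree < n := by
          rw [← hn, Polynomial.natDegree_mul (Polynomial.X_sub_C_ne_zero r) hq,
            Polynomial.natDegree_X_sub_C]
          omega
        have hqroots : ∀ s : ℂ, q.IsRoot s → s ∉ spectrum ℂ X := by
          intro s hs
          exact h s (by simp [Polynomial.IsRoot, hs.eq_zero])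
        have h1 : IsUnit (Polynomial.aeval X (Polynomial.X - Polynomial.C r)) := by
          have hr' : r ∉ spectrum ℂ X := h r (by simp [Polynomial.IsRoot])
          rw [spectrum.mem_iff, not_not] at hr'
          simpa using hr'.neg
        rw [_root_.map_mul]
        exact h1.mul (ih q.natDegree hnd q rfl hq hqroots)
  exact H p.natDegree p rfl hp h

/-- Uniqueness of square roots with spectrum in the open right half plane. -/
lemma sqrt_unique {ι : Type*} [Fintype ι] [DecidableEq ι] {X Y : Matrix ι ι ℂ}
    (h : X * X = Y * Y)
    (hX : ∀ μ ∈ spectrum ℂ X, 0 < μ.re) (hY : ∀ μ ∈ spectrum ℂ Y, 0 < μ.re) : X = Y := by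
  set Z := X - Y with hZ
  have hcomm : X * Z = Z * (-Y) := by
    simp only [hZ, mul_sub, sub_mul, mul_neg, h]
    abel
  have hpow : ∀ k : ℕ, X ^ k * Z = Z * (-Y) ^ k := by
    intro k; induction k with
    | zero => simp
    | succ k ihk =>
      rw [pow_succ', pow_succ', mul_assoc, ihk, ← mul_assoc, hcomm, mul_assoc]
  have haeval : ∀ p : ℂ[X], Polynomial.aeval X p * Z = Z * Polynomial.aeval (-Y) p := by
    intro p
    induction p using Polynomial.induction_on' with
    | add p q hp hq => rw [map_add, map_add, add_mul, mul_add, hp, hq]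
    | monomial k c =>
      rw [Polynomial.aeval_monomial, Polynomial.aeval_monomial]
      calc algebraMap ℂ (Matrix ι ι ℂ) c * X ^ k * Z
          = algebraMap ℂ (Matrix ι ι ℂ) c * (Z * (-Y) ^ k) := by rw [mul_assoc, hpow]
        _ = Z * (algebraMap ℂ (Matrix ι ι ℂ) c * (-Y) ^ k) := by
            rw [← mul_assoc, Algebra.commutes c Z, mul_assoc]
  set p := (-Y).charpoly with hpdef
  have hp0 : p ≠ 0 := (-Y).charpoly_monic.ne_zero
  have hzero : Polynomial.aeval X p * Z = 0 := by
    rw [haeval p, hpdef, Matrix.aeval_self_charpoly, mul_zero]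
  have hroots : ∀ r : ℂ, p.IsRoot r → r ∉ spectrum ℂ X := by
    intro r hr hmem
    have h1 : r ∈ spectrum ℂ (-Y) := (Matrix.mem_spectrum_iff_isRoot _ r).mpr hr
    have h2 : -r ∈ spectrum ℂ Y := Set.mem_neg.mp (by rw [spectrum.neg_eq]; exact h1)
    have h3 := hY _ h2
    have h4 := hX r hmem
    rw [Complex.neg_re] at h3
    linarith
  obtain ⟨u, hu⟩ := aeval_isUnit_of_roots_not_mem X p hp0 hroots
  have hZ0 : Z = 0 := by
    have h5 : (↑u⁻¹ : Matrix ι ι ℂ) * (Polynomial.aeval X p * Z) = 0 := by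
      rw [hzero, mul_zero]
    rwa [← hu, ← mul_assoc, Units.inv_mul, one_mul] at h5
  have := sub_eq_zero.mp hZ0
  exact this

set_option maxHeartbeats 1000000 in
/-- Existence of the principal square root, via a polynomial Newton iteration. -/
lemma exists_principal_sqrt {ι : Type*} [Fintype ι] [DecidableEq ι] (A : Matrix ι ι ℂ)
    (hA : ∀ μ ∈ spectrum ℂ A, ¬ (μ.im = 0 ∧ μ.re ≤ 0)) :
    ∃ X : Matrix ι ι ℂ, X * X = A ∧ ∀ μ ∈ spectrum ℂ X, 0 < μ.re := by
  rcases isEmpty_or_nonempty ι with hι | hι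
  · refine ⟨0, Subsingleton.elim _ _, ?_⟩
    intro μ hμ
    rw [spectrum.mem_iff] at hμ
    exact absurd (isUnit_of_subsingleton _) hμ
  · set χ := A.charpoly with hχ
    have hm : χ.Monic := A.charpoly_monic
    set s := χ.roots.toFinset with hs
    have hroot_spec : ∀ l ∈ s, l ∈ spectrum ℂ A := by
      intro l hl
      rw [Matrix.mem_spectrum_iff_isRoot]
      exact ((Polynomial.mem_roots hm.ne_zero).mp (Multiset.mem_toFinset.mp hl))
    have hlne : ∀ l ∈ s, ¬ (l.im = 0 ∧ l.re ≤ 0) := fun l hl => hA l (hroot_spec l hl)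
    have hl0 : ∀ l ∈ s, l ≠ 0 := by
      intro l hl h0
      exact hlne l hl (by simp [h0])
    set χr := ∏ l ∈ s, (Polynomial.X - Polynomial.C l) with hχr
    have key : ∀ k : ℕ, ∃ p : ℂ[X], (∀ l ∈ s, p.eval l = csqrt l) ∧
        χr ^ (k + 1) ∣ p * p - Polynomial.X := by
      intro k
      induction k with
      | zero =>
        refine ⟨Lagrange.interpolate s id csqrt, ?_, ?_⟩
        · intro l hl
          exact Lagrange.eval_interpolate_at_node (r := csqrt) (Set.injOn_id _) hl
        · rw [pow_one, hχr]
          apply Finset.prod_dvd_of_coprime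
          · exact (Polynomial.pairwise_coprime_X_sub_C (Function.injective_id)).set_pairwise _
          · intro l hl
            rw [Polynomial.dvd_iff_isRoot]
            have hv := Lagrange.eval_interpolate_at_node (r := csqrt) (Set.injOn_id _) hl
            simp only [Polynomial.IsRoot, Polynomial.eval_sub, Polynomial.eval_mul,
              Polynomial.eval_X, id_eq] at *
            rw [hv, csqrt_mul_self (hl0 l hl), sub_self]
      | succ k ihk =>
        obtain ⟨p, hv, hd⟩ := ihk
        have hpcop : IsCoprime p χr := by
          rw [hχr]
          apply IsCoprime.prod_right
          intro l hl
          have hndvd : ¬ (Polynomial.X - Polynomial.C l ∣ p) := by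
            rw [Polynomial.dvd_iff_isRoot, Polynomial.IsRoot, hv l hl]
            exact csqrt_ne_zero l
          exact ((Polynomial.irreducible_X_sub_C l).coprime_iff_not_dvd.mpr hndvd).symm
        obtain ⟨a, b, hab⟩ := hpcop.pow_right (n := k + 2)
        set u := Polynomial.C (2⁻¹ : ℂ) * a with hu
        refine ⟨p - (p * p - Polynomial.X) * u, ?_, ?_⟩
        · intro l hl
          have he : (p * p - Polynomial.X).eval l = 0 := by
            rw [Polynomial.eval_sub, Polynomial.eval_mul, Polynomial.eval_X, hv l hl,
              csqrt_mul_self (hl0 l hl), sub_self]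
          rw [Polynomial.eval_sub, Polynomial.eval_mul, he, zero_mul, sub_zero, hv l hl]
        · have h2 : Polynomial.C (2⁻¹ : ℂ) * 2 = 1 := by
            rw [show ((2 : ℂ[X])) = Polynomial.C (2 : ℂ) from (map_ofNat Polynomial.C 2).symm,
              ← Polynomial.C_mul]
            norm_num
          have keyid : (p - (p * p - Polynomial.X) * u) * (p - (p * p - Polynomial.X) * u)
                - Polynomial.X
              = (p * p - Polynomial.X) * (χr ^ (k + 2)) * b
                + ((p * p - Polynomial.X)) ^ 2 * u ^ 2 := by
            rw [hu]
            linear_combination (-(p * p - Polynomial.X)) * hab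
              - (p * p - Polynomial.X) * p * a * h2
          rw [show k + 1 + 1 = k + 2 from rfl, keyid]
          apply dvd_add
          · exact (dvd_mul_left _ _).mul_right b
          · have h1 : χr ^ (k + 2) ∣ (p * p - Polynomial.X) ^ 2 := by
              have h2' : (χr ^ (k + 1)) ^ 2 ∣ (p * p - Polynomial.X) ^ 2 :=
                pow_dvd_pow_of_dvd hd 2
              rw [← pow_mul] at h2'
              exact (pow_dvd_pow χr (by omega)).trans h2'
            exact h1.mul_right _
    obtain ⟨p0, hv0, hd0⟩ := key χ.natDegree
    have hχ_dvd : χ ∣ χr ^ (χ.natDegree + 1) := by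
      have hsplit : χ = (χ.roots.map fun a => Polynomial.X - Polynomial.C a).prod :=
        (IsAlgClosed.splits χ).eq_prod_roots_of_monic hm
      have hcount : (Multiset.map (fun a => Polynomial.X - Polynomial.C a) χ.roots).prod
          = ∏ l ∈ s, (Polynomial.X - Polynomial.C l) ^ (χ.roots.count l) :=
        Finset.prod_multiset_map_count _ _
      calc χ = ∏ l ∈ s, (Polynomial.X - Polynomial.C l) ^ (χ.roots.count l) :=
            hsplit.trans hcount
        _ ∣ χr ^ (χ.natDegree + 1) := by
            rw [hχr, ← Finset.prod_pow]
            apply Finset.prod_dvd_prod_of_dvd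
            intro l hl
            apply pow_dvd_pow
            calc χ.roots.count l ≤ Multiset.card χ.roots := Multiset.count_le_card _ _
              _ ≤ χ.natDegree := Polynomial.card_roots' χ
              _ ≤ χ.natDegree + 1 := Nat.le_succ _
    have hχ_dvd_e : χ ∣ p0 * p0 - Polynomial.X := hχ_dvd.trans hd0
    set p := p0 %ₘ χ + χ with hp
    have hpmod : p0 %ₘ χ = p0 - χ * (p0 /ₘ χ) := Polynomial.modByMonic_eq_sub_mul_div p0 χ
    have hvp : ∀ l ∈ s, p.eval l = csqrt l := by
      intro l hl
      have hχl : χ.eval l = 0 :=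
        ((Polynomial.mem_roots hm.ne_zero).mp (Multiset.mem_toFinset.mp hl))
      rw [hp, hpmod]
      simp [hχl, hv0 l hl]
    have hdvd_p : χ ∣ p * p - Polynomial.X := by
      have h1 : χ ∣ p - p0 := ⟨1 - p0 /ₘ χ, by rw [hp, hpmod]; ring⟩
      have h3 : p * p - Polynomial.X = (p0 * p0 - Polynomial.X) + (p - p0) * (p + p0) := by
        ring
      rw [h3]
      exact dvd_add hχ_dvd_e (h1.mul_right _)
    have hdeg : 0 < p.degree := by
      have hdegχ : χ.degree = (Fintype.card ι : ℕ) := by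
        rw [Polynomial.degree_eq_natDegree hm.ne_zero, Matrix.charpoly_natDegree_eq_dim]
      have hmod := Polynomial.degree_modByMonic_lt p0 hm
      rw [hp, Polynomial.degree_add_eq_right_of_degree_lt hmod, hdegχ]
      exact_mod_cast Fintype.card_pos
    refine ⟨Polynomial.aeval A p, ?_, ?_⟩
    · obtain ⟨g, hg⟩ := hdvd_p
      have h4 := congrArg (Polynomial.aeval A) hg
      rw [map_sub, _root_.map_mul, Polynomial.aeval_X, _root_.map_mul,
        Matrix.aeval_self_charpoly, zero_mul] at h4
      exact sub_eq_zero.mp h4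
    · intro μ hμ
      rw [spectrum.map_polynomial_aeval_of_degree_pos A p hdeg] at hμ
      obtain ⟨ν, hν, rfl⟩ := hμ
      have hνs : ν ∈ s := Multiset.mem_toFinset.mpr
        ((Polynomial.mem_roots hm.ne_zero).mpr ((Matrix.mem_spectrum_iff_isRoot A ν).mp hν))
      have hval : Polynomial.eval ν p = csqrt ν := hvp ν hνs
      simpa [hval] using csqrt_re_pos (hA ν hν)

lemma principalSqrt_spec {ι : Type*} [Fintype ι] [DecidableEq ι] {A : Matrix ι ι ℂ}
    (h : ∃ X : Matrix ι ι ℂ, X * X = A ∧ ∀ μ ∈ spectrum ℂ X, 0 < μ.re) :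
    principalSqrt A * principalSqrt A = A ∧
      ∀ μ ∈ spectrum ℂ (principalSqrt A), 0 < μ.re := by
  rw [principalSqrt, dif_pos h]
  exact h.choose_spec

lemma principalSqrt_eq_of {ι : Type*} [Fintype ι] [DecidableEq ι] {A X : Matrix ι ι ℂ}
    (hX : X * X = A) (hXs : ∀ μ ∈ spectrum ℂ X, 0 < μ.re) : principalSqrt A = X := by
  have h : ∃ Y : Matrix ι ι ℂ, Y * Y = A ∧ ∀ μ ∈ spectrum ℂ Y, 0 < μ.re := ⟨X, hX, hXs⟩
  obtain ⟨h1, h2⟩ := principalSqrt_spec h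
  exact sqrt_unique (h1.trans hX.symm) h2 hXs

lemma spectrum_fromBlocks_diag_subset {m : Type*} [Fintype m] [DecidableEq m]
    (S : Matrix m m ℂ) :
    spectrum ℂ (Matrix.fromBlocks S 0 0 S) ⊆ spectrum ℂ S := by
  intro μ hμ
  by_contra hm
  rw [spectrum.mem_iff, not_not] at hm
  obtain ⟨B, hB1, hB2⟩ := isUnit_iff_exists.mp hm
  rw [spectrum.mem_iff] at hμ
  apply hμ
  have halg : algebraMap ℂ (Matrix (m ⊕ m) (m ⊕ m) ℂ) μ - Matrix.fromBlocks S 0 0 S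
      = Matrix.fromBlocks (algebraMap ℂ (Matrix m m ℂ) μ - S) 0 0
          (algebraMap ℂ (Matrix m m ℂ) μ - S) := by
    rw [Matrix.algebraMap_eq_diagonal, Matrix.algebraMap_eq_diagonal]
    ext (i | i) (j | j) <;>
      simp [Matrix.fromBlocks, Matrix.diagonal, Matrix.sub_apply, Sum.elim]
  rw [halg]
  refine isUnit_iff_exists.mpr ⟨Matrix.fromBlocks B 0 0 B, ?_, ?_⟩ <;>
    simp [Matrix.fromBlocks_multiply, hB1, hB2, ← Matrix.fromBlocks_one]


/-- For `A` with no eigenvalues on `(-∞,0]`,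
`sign [[0,A],[I,0]] = [[0,A^{1/2}],[A^{-1/2},0]]`. -/
theorem matrix_sign_block_sqrt {n : ℕ} (A : Matrix (Fin n) (Fin n) ℂ)
    (hA : ∀ μ ∈ spectrum ℂ A, ¬ (μ.im = 0 ∧ μ.re ≤ 0)) :
    matrixSign (Matrix.fromBlocks 0 A 1 0) =
      Matrix.fromBlocks 0 (principalSqrt A) (principalSqrt A)⁻¹ 0 := by
  obtain ⟨hS2, hSspec⟩ := principalSqrt_spec (exists_principal_sqrt A hA)
  set S := principalSqrt A with hSdef
  have hSunit : IsUnit S := by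
    by_contra h
    simpa using hSspec 0 ((spectrum.zero_mem_iff ℂ).mpr h)
  have hdet : IsUnit S.det := (Matrix.isUnit_iff_isUnit_det S).mp hSunit
  have hSinv : S * S⁻¹ = 1 := Matrix.mul_nonsing_inv S hdet
  have hSinv' : S⁻¹ * S = 1 := Matrix.nonsing_inv_mul S hdet
  set M : Matrix (Fin n ⊕ Fin n) (Fin n ⊕ Fin n) ℂ := Matrix.fromBlocks 0 A 1 0 with hM
  have hM2 : M * M = Matrix.fromBlocks A 0 0 A := by
    rw [hM, Matrix.fromBlocks_multiply]
    simp
  have hP2 : (Matrix.fromBlocks S 0 0 S) * (Matrix.fromBlocks S 0 0 S)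
      = Matrix.fromBlocks A 0 0 A := by
    rw [Matrix.fromBlocks_multiply]
    simp [hS2]
  have hPspec : ∀ μ ∈ spectrum ℂ (Matrix.fromBlocks S 0 0 S), 0 < μ.re :=
    fun μ h => hSspec μ (spectrum_fromBlocks_diag_subset S h)
  have hPr : principalSqrt (M * M) = Matrix.fromBlocks S 0 0 S := by
    rw [hM2]
    exact principalSqrt_eq_of hP2 hPspec
  have hPinv : (Matrix.fromBlocks S 0 0 S)⁻¹ = Matrix.fromBlocks S⁻¹ 0 0 S⁻¹ := by
    apply Matrix.inv_eq_right_inv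
    rw [Matrix.fromBlocks_multiply]
    simp [hSinv, ← Matrix.fromBlocks_one]
  have hAS : A * S⁻¹ = S := by
    rw [← hS2, mul_assoc, hSinv, mul_one]
  rw [matrixSign, hPr, hPinv, hM, Matrix.fromBlocks_multiply]
  simp [hAS]
end

section
/- Let A ∈ ℝ^{n×n} be nonsingular with Aᵀ M A = M for a symmetric nonsingular M, i.e. A lies in the automorphism group 𝔾. Then the cubic Padé sign update g(A) = A(3I + A²)(I + 3A²)⁻¹ (assuming I + 3A² invertible) again satisfies g(A)ᵀ M g(A) = M. -/
/-!
The condition `AᵀMA = M` is closed under products, so `A² ∈ 𝔾`. For `S ∈ 𝔾` the form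
`(a + bS)ᵀ M (a + bS) = (a² + b²) M + ab (SᵀM + MS)` is symmetric in `a, b`; with `S = A²`
this gives `PᵀMP = QᵀMQ` for `P = 3I + A²`, `Q = I + 3A²`, hence `PQ⁻¹ ∈ 𝔾`, and
`g(A) = A · PQ⁻¹ ∈ 𝔾`.
-/

open Matrix

namespace Matrix

variable {n R : Type*} [Fintype n] [DecidableEq n] [CommRing R]

/-- The paper's group `𝔾`; without assuming `M` nonsingular it is only a monoid. -/
def automorphismSubmonoid (M : Matrix n n R) : Submonoid (Matrix n n R) where
  carrier := {A | Aᵀ * M * A = M}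
  mul_mem' {A B} hA hB := by
    change Aᵀ * M * A = M at hA
    change (A * B)ᵀ * M * (A * B) = M
    calc (A * B)ᵀ * M * (A * B) = Bᵀ * (Aᵀ * M * A) * B := by
          simp only [transpose_mul, Matrix.mul_assoc]
      _ = M := by rw [hA, hB]
  one_mem' := by simp

theorem mem_automorphismSubmonoid {M A : Matrix n n R} :
    A ∈ automorphismSubmonoid M ↔ Aᵀ * M * A = M := Iff.rfl

theorem transpose_mul_mul_smul_one_add_smul_comm {M S : Matrix n n R}
    (hS : S ∈ automorphismSubmonoid M) (a b : R) :
    (a • 1 + b • S)ᵀ * M * (a • 1 + b • S) = (b • 1 + a • S)ᵀ * M * (b • 1 + a • S) := by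
  rw [mem_automorphismSubmonoid] at hS
  simp only [transpose_add, transpose_smul, transpose_one, add_mul, mul_add, smul_mul_assoc,
    mul_smul_comm, one_mul, mul_one, hS]
  module

theorem mul_nonsing_inv_mem_automorphismSubmonoid {M P Q : Matrix n n R}
    (h : Pᵀ * M * P = Qᵀ * M * Q) (hQ : IsUnit Q) :
    P * Q⁻¹ ∈ automorphismSubmonoid M := by
  have hQdet : IsUnit Q.det := (isUnit_iff_isUnit_det Q).mp hQ
  rw [mem_automorphismSubmonoid]
  calc (P * Q⁻¹)ᵀ * M * (P * Q⁻¹) = (Q⁻¹)ᵀ * (Pᵀ * M * P) * Q⁻¹ := by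
        simp only [transpose_mul, Matrix.mul_assoc]
    _ = (Q * Q⁻¹)ᵀ * M * (Q * Q⁻¹) := by
        simp only [h, transpose_mul, Matrix.mul_assoc]
    _ = M := by simp [mul_nonsing_inv Q hQdet]

end Matrix

theorem cubic_pade_sign_step_preserves_automorphism_general {n : ℕ}
    (M A : Matrix (Fin n) (Fin n) ℝ)
    (hA : Aᵀ * M * A = M)
    (hwd : IsUnit (1 + 3 * A ^ 2)) :
    (A * (3 + A ^ 2) * (1 + 3 * A ^ 2)⁻¹)ᵀ * M *
      (A * (3 + A ^ 2) * (1 + 3 * A ^ 2)⁻¹) = M := by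
  have hA' : A ∈ automorphismSubmonoid M := hA
  have hP : (3 : ℝ) • 1 + (1 : ℝ) • A ^ 2 = 3 + A ^ 2 := by
    rw [one_smul, Algebra.smul_def, mul_one, map_ofNat]
  have hQ : (1 : ℝ) • 1 + (3 : ℝ) • A ^ 2 = 1 + 3 * A ^ 2 := by
    rw [one_smul, Algebra.smul_def, map_ofNat]
  have hPQ := transpose_mul_mul_smul_one_add_smul_comm (pow_mem hA' 2) 3 1
  rw [hP, hQ] at hPQ
  rw [← mem_automorphismSubmonoid, Matrix.mul_assoc]
  exact mul_mem hA' (mul_nonsing_inv_mem_automorphismSubmonoid hPQ hwd)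

/-- For a nonsingular real automorphism `A` (`AᵀMA = M`, `M` symmetric nonsingular),
the cubic Padé sign update `g(A) = A(3I + A²)(I + 3A²)⁻¹` again satisfies
`g(A)ᵀ M g(A) = M`. -/
theorem cubic_pade_sign_step_preserves_automorphism {n : ℕ}
    (M A : Matrix (Fin n) (Fin n) ℝ)
    (hMsymm : Mᵀ = M) (hM : IsUnit M) (hAunit : IsUnit A)
    (hA : Aᵀ * M * A = M)
    (hwd : IsUnit (1 + 3 * A ^ 2)) :
    (A * (3 + A ^ 2) * (1 + 3 * A ^ 2)⁻¹)ᵀ * M *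
      (A * (3 + A ^ 2) * (1 + 3 * A ^ 2)⁻¹) = M :=
  cubic_pade_sign_step_preserves_automorphism_general M A hA hwd
end

section
/- Let A, E ∈ ℝ^{n×n} with A invertible. Define the complex matrix X̂ = A + ihE for real h. For h sufficiently small, X̂ is invertible, and one Newton sign step satisfies (X̂ + X̂⁻¹)/2 = (A + A⁻¹)/2 + ih·(E − A⁻¹EA⁻¹)/2 + O(h²) + i·O(h³), where the real-part error is O(h²) and the imaginary-part error is O(h³). -/
open Matrix Asymptotics Filter

attribute [local instance]
  Matrix.frobeniusNormedAddCommGroup Matrix.frobeniusNormedSpace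

/-- The complex-step perturbation `A + i h E` of a real matrix `A` in the real
direction `E` with real step size `h`. -/
noncomputable def csStep {m n : ℕ} (A E : Matrix (Fin m) (Fin n) ℝ) (h : ℝ) :
    Matrix (Fin m) (Fin n) ℂ :=
  A.map Complex.ofReal + ((h : ℂ) * Complex.I) • E.map Complex.ofReal

section aux

variable {n : ℕ}

private lemma mapR_smul (r : ℝ) (M : Matrix (Fin n) (Fin n) ℝ) :
    (r • M).map Complex.ofReal = (r : ℂ) • M.map Complex.ofReal := by
  ext i j; simp [Matrix.map_apply]

private lemma mapR_mul (M N : Matrix (Fin n) (Fin n) ℝ) :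
    (M * N).map Complex.ofReal = M.map Complex.ofReal * N.map Complex.ofReal :=
  Matrix.map_mul (f := Complex.ofRealHom)

private lemma mapR_add (M N : Matrix (Fin n) (Fin n) ℝ) :
    (M + N).map Complex.ofReal = M.map Complex.ofReal + N.map Complex.ofReal := by
  ext i j; simp [Matrix.map_apply]

private lemma mapR_sub (M N : Matrix (Fin n) (Fin n) ℝ) :
    (M - N).map Complex.ofReal = M.map Complex.ofReal - N.map Complex.ofReal := by
  ext i j; simp [Matrix.map_apply]

private lemma mapR_one : ((1 : Matrix (Fin n) (Fin n) ℝ)).map Complex.ofReal = 1 :=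
  Matrix.map_one _ Complex.ofReal_zero Complex.ofReal_one

private lemma pair_mul (M N P Q : Matrix (Fin n) (Fin n) ℝ) (h : ℝ) :
    (M.map Complex.ofReal + ((h : ℂ) * Complex.I) • N.map Complex.ofReal) *
      (P.map Complex.ofReal + ((h : ℂ) * Complex.I) • Q.map Complex.ofReal)
    = (M * P - h ^ 2 • (N * Q)).map Complex.ofReal
      + ((h : ℂ) * Complex.I) • (M * Q + N * P).map Complex.ofReal := by
  have hz : ((h : ℂ) * Complex.I) * ((h : ℂ) * Complex.I) = ((-(h^2) : ℝ) : ℂ) := by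
    push_cast
    ring_nf
    rw [Complex.I_sq]
    ring
  simp only [Matrix.add_mul, Matrix.mul_add, smul_mul_assoc, mul_smul_comm, smul_smul,
    mapR_mul, mapR_sub, mapR_add, mapR_smul, smul_add, hz]
  push_cast
  module

private lemma pair_add (M N P Q : Matrix (Fin n) (Fin n) ℝ) (h : ℝ) :
    (M.map Complex.ofReal + ((h : ℂ) * Complex.I) • N.map Complex.ofReal) +
      (P.map Complex.ofReal + ((h : ℂ) * Complex.I) • Q.map Complex.ofReal)
    = (M + P).map Complex.ofReal
      + ((h : ℂ) * Complex.I) • (N + Q).map Complex.ofReal := by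
  simp only [mapR_add, smul_add]; abel

private lemma pair_half (M N : Matrix (Fin n) (Fin n) ℝ) (h : ℝ) :
    (2 : ℂ)⁻¹ • (M.map Complex.ofReal + ((h : ℂ) * Complex.I) • N.map Complex.ofReal)
    = ((2:ℝ)⁻¹ • M).map Complex.ofReal
      + ((h : ℂ) * Complex.I) • ((2:ℝ)⁻¹ • N).map Complex.ofReal := by
  simp only [mapR_smul, smul_add, smul_smul]
  push_cast
  module

private lemma map_re_eq (M N : Matrix (Fin n) (Fin n) ℝ) (h : ℝ) :
    ((M.map Complex.ofReal + ((h : ℂ) * Complex.I) • N.map Complex.ofReal).map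
      Complex.re) = M := by
  ext i j; simp [Matrix.map_apply]

private lemma map_im_eq (M N : Matrix (Fin n) (Fin n) ℝ) (h : ℝ) :
    ((M.map Complex.ofReal + ((h : ℂ) * Complex.I) • N.map Complex.ofReal).map
      Complex.im) = h • N := by
  ext i j; simp [Matrix.map_apply]

end aux

/-- One step of the complex-step Newton sign iteration: for real `A` invertible and
real `E`, with `X̂ = A + ihE`, for sufficiently small `h` the matrix `X̂` is invertible
and `(X̂ + X̂⁻¹)/2 = (A + A⁻¹)/2 + ih·(E − A⁻¹EA⁻¹)/2 + O(h²) + i·O(h³)`, i.e. the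
real-part error is `O(h²)` and the imaginary-part error is `O(h³)`. -/
theorem complex_step_newton_sign_step {n : ℕ}
    (A E : Matrix (Fin n) (Fin n) ℝ) (hA : IsUnit A) :
    (∀ᶠ h : ℝ in nhds 0, IsUnit (csStep A E h)) ∧
    ((fun h : ℝ =>
        (((2 : ℂ)⁻¹ • (csStep A E h + (csStep A E h)⁻¹)).map Complex.re)
          - (2 : ℝ)⁻¹ • (A + A⁻¹))
        =O[nhds 0] fun h : ℝ => h ^ 2) ∧
    ((fun h : ℝ =>
        (((2 : ℂ)⁻¹ • (csStep A E h + (csStep A E h)⁻¹)).map Complex.im)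
          - h • ((2 : ℝ)⁻¹ • (E - A⁻¹ * E * A⁻¹)))
        =O[nhds 0] fun h : ℝ => h ^ 3) := by
  letI : NormedRing (Matrix (Fin n) (Fin n) ℝ) := Matrix.frobeniusNormedRing
  letI : NormedAlgebra ℝ (Matrix (Fin n) (Fin n) ℝ) := Matrix.frobeniusNormedAlgebra
  have hAd : IsUnit A.det := (Matrix.isUnit_iff_isUnit_det A).mp hA
  have hAAi : A * A⁻¹ = 1 := Matrix.mul_nonsing_inv A hAd
  have hAiA : A⁻¹ * A = 1 := Matrix.nonsing_inv_mul A hAd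
  set B : Matrix (Fin n) (Fin n) ℝ := A⁻¹ * E with hBdef
  set c : ℝ → Matrix (Fin n) (Fin n) ℝ :=
    fun h => Ring.inverse (1 + h ^ 2 • (B * B)) with hcdef
  -- continuity of c at 0
  have hg : Continuous fun h : ℝ => (1 : Matrix (Fin n) (Fin n) ℝ) + h ^ 2 • (B * B) := by
    continuity
  have hc0 : ContinuousAt c 0 := by
    have h1 : ContinuousAt (Ring.inverse : Matrix (Fin n) (Fin n) ℝ → _)
        ((1 : Units (Matrix (Fin n) (Fin n) ℝ)) : Matrix (Fin n) (Fin n) ℝ) :=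
      NormedRing.inverse_continuousAt 1
    have h2 : ContinuousAt (Ring.inverse : Matrix (Fin n) (Fin n) ℝ → _)
        ((fun h : ℝ => (1 : Matrix (Fin n) (Fin n) ℝ) + h ^ 2 • (B * B)) 0) := by
      simpa using h1
    exact ContinuousAt.comp
      (g := (Ring.inverse : Matrix (Fin n) (Fin n) ℝ → _))
      (f := fun h : ℝ => (1 : Matrix (Fin n) (Fin n) ℝ) + h ^ 2 • (B * B))
      h2 hg.continuousAt
  have hcval : c 0 = 1 := by simp [hcdef]
  -- eventually a unit
  have hEvU : ∀ᶠ h : ℝ in nhds 0, IsUnit (1 + h ^ 2 • (B * B)) := by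
    have : {x : Matrix (Fin n) (Fin n) ℝ | IsUnit x} ∈
        nhds ((1 : Matrix (Fin n) (Fin n) ℝ) + (0:ℝ) ^ 2 • (B * B)) := by
      rw [show (1 : Matrix (Fin n) (Fin n) ℝ) + (0:ℝ) ^ 2 • (B * B) = 1 by simp]
      exact Units.nhds 1
    exact hg.continuousAt this
  -- eventually bounded inverse
  set K : ℝ := ‖(1 : Matrix (Fin n) (Fin n) ℝ)‖ + 1 with hKdef
  have hEvN : ∀ᶠ h : ℝ in nhds 0, ‖c h‖ ≤ K := by
    have : ∀ᶠ h : ℝ in nhds 0, c h ∈ Metric.closedBall (c 0) 1 :=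
      hc0 (Metric.closedBall_mem_nhds _ one_pos)
    filter_upwards [this] with h hh
    have hd := Metric.mem_closedBall.mp hh
    rw [hcval, dist_eq_norm] at hd
    have hn : ‖c h‖ ≤ ‖c h - 1‖ + ‖(1 : Matrix (Fin n) (Fin n) ℝ)‖ := by
      simpa using norm_add_le (c h - 1) (1 : Matrix (Fin n) (Fin n) ℝ)
    rw [hKdef]; linarith
  -- key structural identities for each h where 1 + h²B² is a unit
  have key : ∀ h : ℝ, IsUnit (1 + h ^ 2 • (B * B)) →
      IsUnit (csStep A E h) ∧
      (2 : ℂ)⁻¹ • (csStep A E h + (csStep A E h)⁻¹)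
        = ((2:ℝ)⁻¹ • (A + c h * A⁻¹)).map Complex.ofReal
          + ((h : ℂ) * Complex.I) •
            (((2:ℝ)⁻¹ • (E - c h * B * A⁻¹)).map Complex.ofReal) := by
    intro h hu
    have hcmul : c h * (1 + h ^ 2 • (B * B)) = 1 := Ring.inverse_mul_cancel _ hu
    have hcmul' : c h + h ^ 2 • (c h * (B * B)) = 1 := by
      rw [← hcmul]; rw [Matrix.mul_add, Matrix.mul_one, mul_smul_comm]
    -- the candidate inverse Y, written as a pair
    set Y : Matrix (Fin n) (Fin n) ℂ :=
      (c h * A⁻¹).map Complex.ofReal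
        + ((h : ℂ) * Complex.I) • ((-(c h * B * A⁻¹)).map Complex.ofReal) with hYdef
    have hYX : Y * csStep A E h = 1 := by
      rw [hYdef, csStep, pair_mul]
      have e1 : c h * A⁻¹ * A = c h := by rw [mul_assoc, hAiA, mul_one]
      have e2 : -(c h * B * A⁻¹) * E = -(c h * (B * B)) := by
        rw [neg_mul, mul_assoc, mul_assoc, ← hBdef]
      have e3 : c h * A⁻¹ * E = c h * B := by rw [mul_assoc, ← hBdef]
      have e4 : -(c h * B * A⁻¹) * A = -(c h * B) := by
        rw [neg_mul, mul_assoc, hAiA, mul_one]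
      rw [e1, e2, e3, e4]
      have : c h - h ^ 2 • -(c h * (B * B)) = 1 := by
        rw [smul_neg, sub_neg_eq_add, hcmul']
      rw [this]
      simp [mapR_one]
    have hXY : csStep A E h * Y = 1 := mul_eq_one_comm.mpr hYX
    have hUnit : IsUnit (csStep A E h) := ⟨⟨csStep A E h, Y, hXY, hYX⟩, rfl⟩
    have hInv : (csStep A E h)⁻¹ = Y := Matrix.inv_eq_right_inv hXY
    refine ⟨hUnit, ?_⟩
    rw [hInv, hYdef, csStep, pair_add, pair_half, sub_eq_add_neg]
  -- component 1 : eventual invertibility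
  have part1 : ∀ᶠ h : ℝ in nhds 0, IsUnit (csStep A E h) := by
    filter_upwards [hEvU] with h hu using (key h hu).1
  refine ⟨part1, ?_, ?_⟩
  · -- real part error
    rw [isBigO_iff]
    refine ⟨2⁻¹ * K * ‖B * B‖ * ‖A⁻¹‖, ?_⟩
    filter_upwards [hEvU, hEvN] with h hu hN
    have hkey := (key h hu).2
    have hre : (((2 : ℂ)⁻¹ • (csStep A E h + (csStep A E h)⁻¹)).map Complex.re)
        = (2:ℝ)⁻¹ • (A + c h * A⁻¹) := by rw [hkey, map_re_eq]
    rw [hre]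
    have hcmul : c h * (1 + h ^ 2 • (B * B)) = 1 := Ring.inverse_mul_cancel _ hu
    have hcmul' : c h + h ^ 2 • (c h * (B * B)) = 1 := by
      rw [← hcmul]; rw [Matrix.mul_add, Matrix.mul_one, mul_smul_comm]
    have hdiff : (2:ℝ)⁻¹ • (A + c h * A⁻¹) - (2:ℝ)⁻¹ • (A + A⁻¹)
        = -((2⁻¹ * h ^ 2 : ℝ) • (c h * (B * B) * A⁻¹)) := by
      have h1 : c h - 1 = -(h ^ 2 • (c h * (B * B))) := by
        rw [← hcmul']; abel
      have h2 : c h * A⁻¹ - A⁻¹ = (c h - 1) * A⁻¹ := by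
        rw [Matrix.sub_mul, Matrix.one_mul]
      calc (2:ℝ)⁻¹ • (A + c h * A⁻¹) - (2:ℝ)⁻¹ • (A + A⁻¹)
          = (2:ℝ)⁻¹ • (c h * A⁻¹ - A⁻¹) := by rw [← smul_sub]; congr 1; abel
        _ = (2:ℝ)⁻¹ • ((c h - 1) * A⁻¹) := by rw [h2]
        _ = -((2⁻¹ * h ^ 2 : ℝ) • (c h * (B * B) * A⁻¹)) := by
            rw [h1]
            rw [Matrix.neg_mul, smul_neg, smul_mul_assoc, smul_smul]
    rw [hdiff]
    rw [norm_neg, norm_smul]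
    have hb1 : ‖c h * (B * B) * A⁻¹‖ ≤ ‖c h‖ * ‖B * B‖ * ‖A⁻¹‖ :=
      le_trans (norm_mul_le _ _) (by
        have := norm_mul_le (c h) (B * B)
        nlinarith [norm_nonneg (A⁻¹ : Matrix (Fin n) (Fin n) ℝ), norm_nonneg (c h * (B*B))])
    have hK0 : (0:ℝ) ≤ K := by
      rw [hKdef]; positivity
    have h2 : ‖(2⁻¹ * h ^ 2 : ℝ)‖ = 2⁻¹ * h ^ 2 := by
      rw [Real.norm_eq_abs, abs_of_nonneg (by positivity)]
    rw [h2]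
    have hn2 : ‖(h:ℝ) ^ 2‖ = h ^ 2 := by
      rw [Real.norm_eq_abs, abs_of_nonneg (by positivity)]
    rw [hn2]
    have hch : ‖c h‖ * ‖B * B‖ * ‖A⁻¹‖ ≤ K * ‖B * B‖ * ‖A⁻¹‖ :=
      mul_le_mul_of_nonneg_right
        (mul_le_mul_of_nonneg_right hN (norm_nonneg _)) (norm_nonneg _)
    nlinarith [norm_nonneg (c h * (B * B) * A⁻¹), sq_nonneg h]
  · -- imaginary part error
    rw [isBigO_iff]
    refine ⟨2⁻¹ * K * ‖B * B‖ * ‖B * A⁻¹‖, ?_⟩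
    filter_upwards [hEvU, hEvN] with h hu hN
    have hkey := (key h hu).2
    have him : (((2 : ℂ)⁻¹ • (csStep A E h + (csStep A E h)⁻¹)).map Complex.im)
        = h • ((2:ℝ)⁻¹ • (E - c h * B * A⁻¹)) := by rw [hkey, map_im_eq]
    rw [him]
    have hcmul : c h * (1 + h ^ 2 • (B * B)) = 1 := Ring.inverse_mul_cancel _ hu
    have hcmul' : c h + h ^ 2 • (c h * (B * B)) = 1 := by
      rw [← hcmul]; rw [Matrix.mul_add, Matrix.mul_one, mul_smul_comm]
    have hBA : A⁻¹ * E * A⁻¹ = B * A⁻¹ := by rw [hBdef]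
    have h1 : (1 : Matrix (Fin n) (Fin n) ℝ) - c h = h ^ 2 • (c h * (B * B)) := by
      rw [← hcmul']; abel
    have hdiff : h • ((2:ℝ)⁻¹ • (E - c h * B * A⁻¹))
        - h • ((2:ℝ)⁻¹ • (E - A⁻¹ * E * A⁻¹))
        = (h * 2⁻¹ * h ^ 2 : ℝ) • (c h * (B * B) * (B * A⁻¹)) := by
      rw [hBA, ← smul_sub, ← smul_sub, ← sub_add_sub_cancel _ (E - B * A⁻¹)]
      have e : (E - c h * B * A⁻¹) - (E - B * A⁻¹) + ((E - B * A⁻¹) - (E - B * A⁻¹))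
          = (1 - c h) * (B * A⁻¹) := by
        rw [sub_self, add_zero, Matrix.sub_mul, Matrix.one_mul]
        rw [mul_assoc (c h) B A⁻¹]
        abel
      rw [e, h1, smul_mul_assoc, smul_smul, smul_smul]
    rw [hdiff, norm_smul]
    have hb1 : ‖c h * (B * B) * (B * A⁻¹)‖ ≤ ‖c h‖ * ‖B * B‖ * ‖B * A⁻¹‖ :=
      le_trans (norm_mul_le _ _) (by
        have := norm_mul_le (c h) (B * B)
        nlinarith [norm_nonneg (B * A⁻¹), norm_nonneg (c h * (B*B))])
    have hK0 : (0:ℝ) ≤ K := by rw [hKdef]; positivity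
    have hch : ‖c h‖ * ‖B * B‖ * ‖B * A⁻¹‖ ≤ K * ‖B * B‖ * ‖B * A⁻¹‖ :=
      mul_le_mul_of_nonneg_right
        (mul_le_mul_of_nonneg_right hN (norm_nonneg _)) (norm_nonneg _)
    have hn3 : ‖(h:ℝ) ^ 3‖ = |h| ^ 3 := by
      rw [Real.norm_eq_abs, abs_pow]
    have hn4 : ‖(h * 2⁻¹ * h ^ 2 : ℝ)‖ = 2⁻¹ * |h| ^ 3 := by
      have h3 : |h| ^ 3 = |h| * h ^ 2 := by
        rw [show (3:ℕ) = 2 + 1 from rfl, pow_succ, sq_abs]; ring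
      rw [Real.norm_eq_abs, abs_mul, abs_mul,
        abs_of_nonneg (sq_nonneg h),
        abs_of_nonneg (by norm_num : (0:ℝ) ≤ (2⁻¹:ℝ)), h3]
      ring
    rw [hn3, hn4]
    nlinarith [norm_nonneg (c h * (B * B) * (B * A⁻¹)), pow_nonneg (abs_nonneg h) 3]
end

section
/- Let f: ℂ^{n×n} → ℂ^{n×n} be a matrix function mapping real matrices to real matrices that is twice continuously Fréchet differentiable at A ∈ ℝ^{n×n} (in the real sense, extended analytically). Then for real matrices A, E and real h → 0: f(A + ihE) = f(A) + ih·L_f(A,E) + O(h²), and consequently Im(f(A+ihE))/h = L_f(A,E) + O(h) (with O(h²) when f is three times differentiable). -/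
open Matrix Asymptotics Filter

attribute [local instance]
  Matrix.frobeniusNormedAddCommGroup Matrix.frobeniusNormedSpace

/-- Second-order Taylor bound for a one-variable analytic function. -/
lemma taylor2_aux {F : Type*} [NormedAddCommGroup F] [NormedSpace ℂ F] {g : ℂ → F} {b : F}
    (hg : AnalyticAt ℂ g 0) (hd : HasDerivAt g b 0) :
    (fun z : ℂ => g z - g 0 - z • b) =O[nhds 0] fun z => ‖z‖ ^ 2 := by
  obtain ⟨p, hp⟩ := hg
  have h2 := hp.isBigO_sub_partialSum_pow 2
  have hcurry : continuousMultilinearCurryFin1 ℂ ℂ F (p 1)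
      = ContinuousLinearMap.smulRight (ContinuousLinearMap.id ℂ ℂ) b :=
    hp.hasFDerivAt.unique hd.hasFDerivAt
  have heq : ∀ y : ℂ, g (0 + y) - p.partialSum 2 y = g y - g 0 - y • b := by
    intro y
    have h0 : p 0 (fun _ => y) = g 0 := hp.coeff_zero _
    have h1 : p 1 (fun _ => y) = y • b := by
      have := congrArg (fun (T : ℂ →L[ℂ] F) => T y) hcurry
      simpa using this
    rw [FormalMultilinearSeries.apply_eq_pow_smul_coeff] at h0 h1
    simp only [pow_zero, one_smul, pow_one] at h0 h1
    simp [FormalMultilinearSeries.partialSum, Finset.sum_range_succ, h0, h1, sub_sub]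
  calc (fun z : ℂ => g z - g 0 - z • b) = fun y => g (0 + y) - p.partialSum 2 y := by
        ext y; rw [heq]
    _ =O[nhds 0] fun z => ‖z‖ ^ 2 := h2

/-- Entrywise imaginary part does not increase the Frobenius norm. -/
lemma norm_map_im_le {n : ℕ} (X : Matrix (Fin n) (Fin n) ℂ) :
    ‖X.map Complex.im‖ ≤ ‖X‖ := by
  rw [Matrix.frobenius_norm_def, Matrix.frobenius_norm_def]
  refine Real.rpow_le_rpow ?_ ?_ (by norm_num)
  · exact Finset.sum_nonneg fun i _ => Finset.sum_nonneg fun j _ =>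
      Real.rpow_nonneg (norm_nonneg _) _
  · refine Finset.sum_le_sum fun i _ => Finset.sum_le_sum fun j _ => ?_
    refine Real.rpow_le_rpow (norm_nonneg _) ?_ (by norm_num)
    simpa [Matrix.map_apply, Real.norm_eq_abs] using Complex.abs_im_le_norm (X i j)

/-- Complex Step for a real-preserving matrix function `f` that extends analytically
to complex arguments: for real `A`, `E` and real `h → 0`,
`f(A + ihE) = f(A) + ih·L_f(A,E) + O(h²)`, and consequently
`Im (f(A + ihE)) = h·L_f(A,E) + O(h²)` (so `Im (f(A+ihE))/h = L_f(A,E) + O(h)`). -/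
theorem complex_step_general {n : ℕ}
    (f : Matrix (Fin n) (Fin n) ℂ → Matrix (Fin n) (Fin n) ℂ)
    (A E : Matrix (Fin n) (Fin n) ℝ)
    (hreal : ∀ X : Matrix (Fin n) (Fin n) ℝ,
      ∃ Y : Matrix (Fin n) (Fin n) ℝ, f (X.map Complex.ofReal) = Y.map Complex.ofReal)
    (hf : AnalyticAt ℂ f (A.map Complex.ofReal))
    (L : Matrix (Fin n) (Fin n) ℂ →L[ℂ] Matrix (Fin n) (Fin n) ℂ)
    (hL : HasFDerivAt f L (A.map Complex.ofReal)) :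
    ((fun h : ℝ =>
        f (csStep A E h) - f (A.map Complex.ofReal)
          - ((h : ℂ) * Complex.I) • L (E.map Complex.ofReal))
        =O[nhds 0] fun h : ℝ => h ^ 2) ∧
    ((fun h : ℝ =>
        (f (csStep A E h)).map Complex.im
          - h • (L (E.map Complex.ofReal)).map Complex.re)
        =O[nhds 0] fun h : ℝ => h ^ 2) := by
  set c := A.map (Complex.ofReal) with hc
  set Em := E.map (Complex.ofReal) with hEm
  set d := Complex.I • Em with hd
  set g : ℂ → Matrix (Fin n) (Fin n) ℂ := fun z => f (c + z • d) with hg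
  -- analyticity of g at 0
  have hinner : AnalyticAt ℂ (fun z : ℂ => c + z • d) 0 := by
    have : AnalyticAt ℂ (fun z : ℂ => ((ContinuousLinearMap.id ℂ ℂ).smulRight d) z) 0 :=
      (ContinuousLinearMap.analyticAt _ 0)
    rw [show (fun z : ℂ => c + z • d) = (fun _ => c) + fun z => ((ContinuousLinearMap.id ℂ ℂ).smulRight d) z from by ext z; simp]
    exact analyticAt_const.add this
  have hga : AnalyticAt ℂ g 0 := by
    apply AnalyticAt.comp (x := (0:ℂ)) ?_ hinner
    simpa using hf
  -- derivative of g at 0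
  have hinnerd : HasDerivAt (fun z : ℂ => c + z • d) d 0 := by
    have := ((hasDerivAt_id (0 : ℂ)).smul_const d).const_add c
    simp only [one_smul] at this
    exact this
  have hgd : HasDerivAt g (L d) 0 := by
    have hL' : HasFDerivAt f L ((0:ℂ) • d + c) := by simpa using hL
    have := HasFDerivAt.comp_hasDerivAt (x := (0:ℂ)) (by rw [zero_smul, add_zero]; exact hL) hinnerd
    exact this
  have O1 := taylor2_aux hga hgd
  -- compose with ofReal
  have htend : Tendsto (fun h : ℝ => (h : ℂ)) (nhds 0) (nhds 0) := by
    simpa using (Complex.continuous_ofReal.tendsto 0)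
  have O2 := O1.comp_tendsto htend
  have key1 : (fun h : ℝ =>
        f (csStep A E h) - f c - ((h : ℂ) * Complex.I) • L Em)
        =O[nhds 0] fun h : ℝ => h ^ 2 := by
    have heqf : (fun h : ℝ => f (csStep A E h) - f c - ((h : ℂ) * Complex.I) • L Em)
        = (fun z : ℂ => g z - g 0 - z • L d) ∘ (fun h : ℝ => (h : ℂ)) := by
      funext h
      have e1 : csStep A E h = c + (h : ℂ) • d := by
        simp [csStep, hd, smul_smul, hc, hEm]
      have e2 : c + (0 : ℂ) • d = c := by simp
      have e3 : (h : ℂ) • L d = ((h : ℂ) * Complex.I) • L Em := by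
        rw [hd, L.map_smul, smul_smul]
      simp [hg, e1, e2, e3]
    rw [heqf]
    calc ((fun z : ℂ => g z - g 0 - z • L d) ∘ fun h : ℝ => (h : ℂ))
        =O[nhds 0] fun h : ℝ => ‖(h : ℂ)‖ ^ 2 := O2
      _ =O[nhds 0] fun h : ℝ => h ^ 2 := by
          apply Asymptotics.isBigO_of_le
          intro h
          simp [Complex.norm_real, sq_abs, abs_pow]
  refine ⟨key1, ?_⟩
  -- imaginary part
  obtain ⟨Y0, hY0⟩ := hreal A
  have heq2 : (fun h : ℝ =>
        (f (csStep A E h)).map Complex.im - h • (L Em).map Complex.re)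
      = fun h : ℝ =>
        (f (csStep A E h) - f c - ((h : ℂ) * Complex.I) • L Em).map Complex.im := by
    funext h
    ext i j
    rw [hc, hY0]
    simp [Matrix.map_apply, Matrix.sub_apply, Matrix.smul_apply, smul_eq_mul,
      Complex.sub_im, Complex.mul_im, Complex.mul_re, mul_comm]
  rw [heq2]
  refine Asymptotics.IsBigO.trans ?_ key1
  apply Asymptotics.isBigO_of_le
  intro h
  simpa using norm_map_im_le (f (csStep A E h) - f c - ((h : ℂ) * Complex.I) • L Em)
end

section
/- Let A ∈ ℝ^{m×n} (m ≥ n) have full column rank n and let E ∈ ℝ^{m×n}. For h sufficiently small, X̂ = A + ihE satisfies: X̂ᵀX̂ is invertible, and the Newton polar update (1/2)·X̂·(I + (X̂ᵀX̂)⁻¹) equals X₁ + ih·E₁ + O(h²) + i·O(h³), where X₁ = (1/2)A(I + (AᵀA)⁻¹) and E₁ = (1/2)[E(I + (AᵀA)⁻¹) − A(AᵀA)⁻¹(AᵀE + EᵀA)(AᵀA)⁻¹]. -/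
open Matrix Asymptotics Filter

attribute [local instance]
  Matrix.frobeniusNormedAddCommGroup Matrix.frobeniusNormedSpace

namespace CSAux

local notation "φ" => Complex.ofReal

lemma neumann3 {R : Type*} [Ring R] {S D N J : R} (hJS : J * S = 1)
    (hMN : (S + D) * N = 1) :
    N = J - J*D*J + J*D*(J*D*J) - J*D*(J*D*(J*D*N)) := by
  have h0 : N + J*D*N = J := by
    calc N + J*D*N = (J*S)*N + J*D*N := by rw [hJS, one_mul]
    _ = J*((S+D)*N) := by noncomm_ring
    _ = J := by rw [hMN, mul_one]
  have h1 : N = J - J*D*N := eq_sub_iff_add_eq.mpr h0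
  have h3 : N = J - J*D*(J - J*D*(J - J*D*N)) := by
    conv_lhs => rw [h1, h1, h1]
  conv_lhs => rw [h3]
  noncomm_ring

lemma neumann1 {R : Type*} [Ring R] {S D N J : R} (hJS : J * S = 1)
    (hMN : (S + D) * N = 1) : N = J - J*D*N := by
  apply eq_sub_iff_add_eq.mpr
  calc N + J*D*N = (J*S)*N + J*D*N := by rw [hJS, one_mul]
  _ = J*((S+D)*N) := by noncomm_ring
  _ = J := by rw [hMN, mul_one]

/-- The `O(h³)` coefficient function in the expansion. -/
noncomputable def Gaux {m n : ℕ} (Ac Ec : Matrix (Fin m) (Fin n) ℂ)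
    (T U J N : Matrix (Fin n) (Fin n) ℂ) (y : ℂ) : Matrix (Fin m) (Fin n) ℂ :=
  (2:ℂ)⁻¹ • (
      Ac * (J*(T*J*U + U*J*T)*J) + Ec * (J*T*J*T*J) - Ec * (J*U*J)
      + y • (Ac * (J*U*J*U*J) + Ec * (J*(T*J*U + U*J*T)*J))
      + (y*y) • (Ec * (J*U*J*U*J))
      - (Ac + y • Ec) * ((J*T*J*T*J + y • (J*(T*J*U+U*J*T)*J) + (y*y) • (J*U*J*U*J))
          * ((T + y • U) * N)))

lemma expand_key {m n : ℕ} (Ac Ec : Matrix (Fin m) (Fin n) ℂ)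
    (S T U J N : Matrix (Fin n) (Fin n) ℂ) (y : ℂ)
    (hJS : J * S = 1)
    (hMN : (S + (y • T + (y*y) • U)) * N = 1) :
    (2:ℂ)⁻¹ • ((Ac + y • Ec) * (1 + N)) =
      (2:ℂ)⁻¹ • (Ac * (1 + J))
      + y • ((2:ℂ)⁻¹ • (Ec * (1 + J) - Ac * (J*T*J)))
      + (y*y) • ((2:ℂ)⁻¹ • (Ac * (J*T*J*T*J) - Ac * (J*U*J) - Ec * (J*T*J)))
      + (y*y*y) • Gaux Ac Ec T U J N y := by
  have h3 := neumann3 hJS hMN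
  conv_lhs => rw [h3]
  unfold Gaux
  simp only [mul_add, add_mul, mul_sub, sub_mul, Matrix.mul_add, Matrix.add_mul,
    Matrix.mul_sub, Matrix.sub_mul, Matrix.smul_mul, Matrix.mul_smul,
    smul_add, smul_sub, smul_smul, mul_one, one_mul, Matrix.mul_one, Matrix.one_mul,
    Matrix.mul_assoc]
  match_scalars <;> ring

lemma isUnit_of_rank_eq_card {n : ℕ} (B : Matrix (Fin n) (Fin n) ℝ) (h : B.rank = n) :
    IsUnit B := by
  rw [← Matrix.mulVec_surjective_iff_isUnit]
  have hr : LinearMap.range B.mulVecLin = ⊤ := by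
    apply Submodule.eq_top_of_finrank_eq
    rw [Module.finrank_fin_fun]
    exact h
  intro v
  obtain ⟨w, hw⟩ := LinearMap.range_eq_top.mp hr v
  exact ⟨w, by simpa [Matrix.mulVecLin_apply] using hw⟩

lemma mapMul {a b c : ℕ} (X : Matrix (Fin a) (Fin b) ℝ) (Y : Matrix (Fin b) (Fin c) ℝ) :
    (X*Y).map φ = X.map φ * Y.map φ :=
  Matrix.map_mul (f := Complex.ofRealHom)

lemma mapAdd {a b : ℕ} (X Y : Matrix (Fin a) (Fin b) ℝ) :
    (X+Y).map φ = X.map φ + Y.map φ := by ext i j; simp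

lemma mapSub {a b : ℕ} (X Y : Matrix (Fin a) (Fin b) ℝ) :
    (X-Y).map φ = X.map φ - Y.map φ := by ext i j; simp

lemma mapOne {a : ℕ} : (1 : Matrix (Fin a) (Fin a) ℝ).map φ = 1 :=
  Matrix.map_one _ Complex.ofReal_zero Complex.ofReal_one

lemma mapSmul {a b : ℕ} (r : ℝ) (X : Matrix (Fin a) (Fin b) ℝ) :
    (r • X).map φ = (r:ℂ) • X.map φ := by ext i j; simp

lemma mapTrans {a b : ℕ} (X : Matrix (Fin a) (Fin b) ℝ) :
    (X.map φ)ᵀ = Xᵀ.map φ := Matrix.transpose_map.symm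

lemma hMlem {m n : ℕ} (A E : Matrix (Fin m) (Fin n) ℝ) (h : ℝ) :
    (csStep A E h)ᵀ * csStep A E h =
      (Aᵀ*A).map φ + (((h:ℂ)*Complex.I) • ((Aᵀ*E + Eᵀ*A).map φ)
        + ((((h:ℂ)*Complex.I))*((h:ℂ)*Complex.I)) • ((Eᵀ*E).map φ)) := by
  simp only [csStep, transpose_add, transpose_smul, mapTrans, mapMul, mapAdd,
    Matrix.add_mul, Matrix.mul_add, Matrix.smul_mul, Matrix.mul_smul, smul_smul, smul_add]
  match_scalars <;> ring

lemma normMapRe {a b : ℕ} (X : Matrix (Fin a) (Fin b) ℂ) :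
    ‖X.map Complex.re‖ ≤ ‖X‖ := by
  rw [Matrix.frobenius_norm_def, Matrix.frobenius_norm_def]
  apply Real.rpow_le_rpow
  · positivity
  · apply Finset.sum_le_sum; intro i _
    apply Finset.sum_le_sum; intro j _
    apply Real.rpow_le_rpow (norm_nonneg _) _ (by norm_num)
    simpa [Matrix.map_apply, Real.norm_eq_abs] using
      Complex.abs_re_le_norm (X i j)
  · norm_num

lemma normMapIm {a b : ℕ} (X : Matrix (Fin a) (Fin b) ℂ) :
    ‖X.map Complex.im‖ ≤ ‖X‖ := by
  rw [Matrix.frobenius_norm_def, Matrix.frobenius_norm_def]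
  apply Real.rpow_le_rpow
  · positivity
  · apply Finset.sum_le_sum; intro i _
    apply Finset.sum_le_sum; intro j _
    apply Real.rpow_le_rpow (norm_nonneg _) _ (by norm_num)
    simpa [Matrix.map_apply, Real.norm_eq_abs] using
      Complex.abs_im_le_norm (X i j)
  · norm_num

lemma mulO {a b c : ℕ} {l : Filter ℝ} {f : ℝ → Matrix (Fin a) (Fin b) ℂ}
    {g : ℝ → Matrix (Fin b) (Fin c) ℂ}
    (hf : f =O[l] (fun _ => (1:ℝ))) (hg : g =O[l] (fun _ => (1:ℝ))) :
    (fun x => f x * g x) =O[l] (fun _ => (1:ℝ)) := by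
  obtain ⟨C₁, hC₁⟩ := hf.isBigOWith
  obtain ⟨C₂, hC₂⟩ := hg.isBigOWith
  rw [IsBigOWith] at hC₁ hC₂
  apply IsBigO.of_bound (C₁*C₂)
  filter_upwards [hC₁, hC₂] with x h1 h2
  simp only [norm_one, mul_one] at h1 h2 ⊢
  calc ‖f x * g x‖ ≤ ‖f x‖ * ‖g x‖ := Matrix.frobenius_norm_mul _ _
  _ ≤ C₁ * C₂ := by
      have := norm_nonneg (f x); have := norm_nonneg (g x); nlinarith

lemma constO {a b : ℕ} {l : Filter ℝ} (C : Matrix (Fin a) (Fin b) ℂ) :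
    (fun _ : ℝ => C) =O[l] (fun _ => (1:ℝ)) :=
  isBigO_const_const _ one_ne_zero _

lemma smulO {a b : ℕ} {l : Filter ℝ} {k : ℝ → ℂ} {f : ℝ → Matrix (Fin a) (Fin b) ℂ}
    (hk : k =O[l] (fun _ => (1:ℝ))) (hf : f =O[l] (fun _ => (1:ℝ))) :
    (fun x => k x • f x) =O[l] (fun _ => (1:ℝ)) := by
  have := hk.smul hf
  simpa using this

lemma evAbs (ε : ℝ) (hε : 0 < ε) : ∀ᶠ h : ℝ in nhds 0, |h| < ε := by
  have hm : Set.Ioo (-ε) ε ∈ nhds (0:ℝ) := Ioo_mem_nhds (by linarith) hε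
  filter_upwards [hm] with h hh
  rw [abs_lt]; exact ⟨hh.1, hh.2⟩

lemma yO : (fun h : ℝ => (h:ℂ) * Complex.I) =O[nhds 0] (fun _ => (1:ℝ)) := by
  apply IsBigO.of_bound 1
  filter_upwards [evAbs 1 one_pos] with h hh
  simp only [norm_one, mul_one, norm_mul, Complex.norm_I, Complex.norm_real, Real.norm_eq_abs]
  simpa using hh.le

lemma mulO_c {l : Filter ℝ} {k₁ k₂ : ℝ → ℂ}
    (h₁ : k₁ =O[l] (fun _ => (1:ℝ))) (h₂ : k₂ =O[l] (fun _ => (1:ℝ))) :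
    (fun x => k₁ x * k₂ x) =O[l] (fun _ => (1:ℝ)) := by
  simpa using h₁.mul h₂

lemma Gaux_O {m n : ℕ} (Ac Ec : Matrix (Fin m) (Fin n) ℂ)
    (T U J : Matrix (Fin n) (Fin n) ℂ) {Nf : ℝ → Matrix (Fin n) (Fin n) ℂ}
    (hN : Nf =O[nhds 0] (fun _ => (1:ℝ))) :
    (fun h : ℝ => Gaux Ac Ec T U J (Nf h) ((h:ℂ)*Complex.I)) =O[nhds 0]
      (fun _ => (1:ℝ)) := by
  unfold Gaux
  refine smulO (isBigO_const_const _ one_ne_zero _) ?_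
  refine IsBigO.sub (IsBigO.add (IsBigO.add (IsBigO.sub
      ((constO _).add (constO _)) (constO _)) (smulO yO (constO _)))
      (smulO (mulO_c yO yO) (constO _))) ?_
  refine mulO ((constO Ac).add (smulO yO (constO Ec)))
    (mulO (((constO _).add (smulO yO (constO _))).add (smulO (mulO_c yO yO) (constO _)))
      (mulO ((constO T).add (smulO yO (constO U))) hN))

lemma mapImO {a b : ℕ} {l : Filter ℝ} {F : ℝ → Matrix (Fin a) (Fin b) ℂ}
    (hF : F =O[l] (fun _ => (1:ℝ))) :
    (fun h => (F h).map Complex.im) =O[l] (fun _ => (1:ℝ)) := by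
  obtain ⟨C, hC⟩ := hF.isBigOWith
  rw [IsBigOWith] at hC
  apply IsBigO.of_bound C
  filter_upwards [hC] with x hx
  exact le_trans (normMapIm _) hx

lemma mapReO {a b : ℕ} {l : Filter ℝ} {F : ℝ → Matrix (Fin a) (Fin b) ℂ}
    (hF : F =O[l] (fun _ => (1:ℝ))) :
    (fun h => (F h).map Complex.re) =O[l] (fun _ => (1:ℝ)) := by
  obtain ⟨C, hC⟩ := hF.isBigOWith
  rw [IsBigOWith] at hC
  apply IsBigO.of_bound C
  filter_upwards [hC] with x hx
  exact le_trans (normMapRe _) hx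

lemma smulRO {a b : ℕ} {F : ℝ → Matrix (Fin a) (Fin b) ℝ} {k : ℝ → ℝ}
    {l : Filter ℝ} (hF : F =O[l] (fun _ => (1:ℝ))) :
    (fun h => k h • F h) =O[l] k := by
  have := (isBigO_refl k l).smul hF
  simpa using this

lemma pow32O : (fun h : ℝ => h^3) =O[nhds 0] (fun h : ℝ => h^2) := by
  apply IsBigO.of_bound 1
  filter_upwards [evAbs 1 one_pos] with h hh
  simp only [Real.norm_eq_abs, abs_pow, one_mul]
  exact pow_le_pow_of_le_one (abs_nonneg h) hh.le (by norm_num)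

lemma invO {n : ℕ} {Mf : ℝ → Matrix (Fin n) (Fin n) ℂ} {S T U J : Matrix (Fin n) (Fin n) ℂ}
    (hJS : J * S = 1)
    (hMf : ∀ h : ℝ, Mf h = S + (((h:ℂ)*Complex.I) • T
      + (((h:ℂ)*Complex.I)*((h:ℂ)*Complex.I)) • U))
    (hev : ∀ᶠ h : ℝ in nhds 0, IsUnit (Mf h)) :
    (fun h : ℝ => (Mf h)⁻¹) =O[nhds 0] (fun _ => (1:ℝ)) := by
  set c := ‖J‖ with hcdef
  have hc : 0 ≤ c := norm_nonneg _
  have ht0 : (0:ℝ) ≤ ‖T‖ := norm_nonneg _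
  have hu0 : (0:ℝ) ≤ ‖U‖ := norm_nonneg _
  have hx : (0:ℝ) < 2*(c+1)*(‖T‖+‖U‖+1) :=
    mul_pos (mul_pos two_pos (by linarith)) (by linarith)
  have hεpos : (0:ℝ) < min 1 (2*(c+1)*(‖T‖+‖U‖+1))⁻¹ := lt_min one_pos (inv_pos.mpr hx)
  apply IsBigO.of_bound (2*(c+1))
  filter_upwards [hev, evAbs _ hεpos] with h hu hh
  have hh1 : |h| ≤ 1 := le_of_lt (lt_of_lt_of_le hh (min_le_left _ _))
  have hh2 : |h| ≤ (2*(c+1)*(‖T‖+‖U‖+1))⁻¹ := le_of_lt (lt_of_lt_of_le hh (min_le_right _ _))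
  have hMN : (S + (((h:ℂ)*Complex.I) • T + (((h:ℂ)*Complex.I)*((h:ℂ)*Complex.I)) • U))
      * (Mf h)⁻¹ = 1 := by
    rw [← hMf h]
    exact Matrix.mul_nonsing_inv _ ((Matrix.isUnit_iff_isUnit_det _).mp hu)
  have h1 := neumann1 hJS hMN
  set D := ((h:ℂ)*Complex.I) • T + (((h:ℂ)*Complex.I)*((h:ℂ)*Complex.I)) • U with hD
  have hyn : ‖(h:ℂ)*Complex.I‖ = |h| := by
    simp [norm_mul, Complex.norm_real, Real.norm_eq_abs]
  have hDn : ‖D‖ ≤ |h| * (‖T‖ + ‖U‖) := by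
    calc ‖D‖ ≤ ‖((h:ℂ)*Complex.I) • T‖ + ‖(((h:ℂ)*Complex.I)*((h:ℂ)*Complex.I)) • U‖ :=
          norm_add_le _ _
    _ = |h| * ‖T‖ + (|h| * |h|) * ‖U‖ := by
        rw [norm_smul, norm_smul, hyn, norm_mul, hyn]
    _ ≤ |h| * ‖T‖ + |h| * ‖U‖ := by nlinarith [mul_le_mul_of_nonneg_right hh1 (mul_nonneg (abs_nonneg h) hu0)]
    _ = |h| * (‖T‖ + ‖U‖) := by ring
  have hNn : ‖(Mf h)⁻¹‖ ≤ c + c * ‖D‖ * ‖(Mf h)⁻¹‖ := by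
    calc ‖(Mf h)⁻¹‖ = ‖J - J*D*(Mf h)⁻¹‖ := by rw [← h1]
    _ ≤ ‖J‖ + ‖J*D*(Mf h)⁻¹‖ := norm_sub_le _ _
    _ ≤ c + c*‖D‖*‖(Mf h)⁻¹‖ := by
        have e1 := Matrix.frobenius_norm_mul (J*D) ((Mf h)⁻¹)
        have e2 := Matrix.frobenius_norm_mul J D
        have := norm_nonneg ((Mf h)⁻¹)
        have := norm_nonneg (J*D)
        have := norm_nonneg D
        nlinarith
  have hsmall : c * ‖D‖ ≤ 2⁻¹ := by
    have h4 : |h| * (2*(c+1)*(‖T‖+‖U‖+1)) ≤ 1 := by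
      rw [← le_div_iff₀ hx, ← one_div] at *
      exact hh2
    have := norm_nonneg D
    have := norm_nonneg T
    have := norm_nonneg U
    have := abs_nonneg h
    nlinarith [mul_le_mul_of_nonneg_left hDn hc]
  have := norm_nonneg ((Mf h)⁻¹)
  simp only [norm_one, mul_one]
  nlinarith

end CSAux


open CSAux

/-- One step of the complex-step Newton polar iteration: for real `A ∈ ℝ^{m×n}`
(`m ≥ n`) of full column rank and real `E`, with `X̂ = A + ihE`, for small `h` the
matrix `X̂ᵀX̂` is invertible and `(1/2)·X̂·(I + (X̂ᵀX̂)⁻¹) = X₁ + ih·E₁ + O(h²) + i·O(h³)`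
where `X₁ = (1/2)A(I + (AᵀA)⁻¹)` and
`E₁ = (1/2)[E(I + (AᵀA)⁻¹) − A(AᵀA)⁻¹(AᵀE + EᵀA)(AᵀA)⁻¹]`. -/
theorem complex_step_newton_polar_step {m n : ℕ} (hmn : n ≤ m)
    (A E : Matrix (Fin m) (Fin n) ℝ) (hrank : A.rank = n) :
    (∀ᶠ h : ℝ in nhds 0, IsUnit ((csStep A E h)ᵀ * csStep A E h)) ∧
    ((fun h : ℝ =>
        (((2 : ℂ)⁻¹ • (csStep A E h * (1 + ((csStep A E h)ᵀ * csStep A E h)⁻¹))).map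
            Complex.re)
          - (2 : ℝ)⁻¹ • (A * (1 + (Aᵀ * A)⁻¹)))
        =O[nhds 0] fun h : ℝ => h ^ 2) ∧
    ((fun h : ℝ =>
        (((2 : ℂ)⁻¹ • (csStep A E h * (1 + ((csStep A E h)ᵀ * csStep A E h)⁻¹))).map
            Complex.im)
          - h • ((2 : ℝ)⁻¹ •
              (E * (1 + (Aᵀ * A)⁻¹)
                - A * (Aᵀ * A)⁻¹ * (Aᵀ * E + Eᵀ * A) * (Aᵀ * A)⁻¹)))
        =O[nhds 0] fun h : ℝ => h ^ 3) := by
  classical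
  have hSU : IsUnit (Aᵀ * A) :=
    isUnit_of_rank_eq_card _ (by rw [Matrix.rank_transpose_mul_self, hrank])
  have hSd : IsUnit (Aᵀ * A).det := (Matrix.isUnit_iff_isUnit_det _).mp hSU
  have hKS : (Aᵀ * A)⁻¹ * (Aᵀ * A) = 1 := Matrix.nonsing_inv_mul _ hSd
  set Ac : Matrix (Fin m) (Fin n) ℂ := A.map Complex.ofReal with hAc
  set Ec : Matrix (Fin m) (Fin n) ℂ := E.map Complex.ofReal with hEc
  set S : Matrix (Fin n) (Fin n) ℂ := (Aᵀ*A).map Complex.ofReal with hS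
  set T : Matrix (Fin n) (Fin n) ℂ := (Aᵀ*E + Eᵀ*A).map Complex.ofReal with hT
  set U : Matrix (Fin n) (Fin n) ℂ := (Eᵀ*E).map Complex.ofReal with hU
  set J : Matrix (Fin n) (Fin n) ℂ := ((Aᵀ*A)⁻¹).map Complex.ofReal with hJ
  have hJS : J * S = 1 := by rw [hJ, hS, ← mapMul, hKS, mapOne]
  have hM : ∀ h : ℝ, (csStep A E h)ᵀ * csStep A E h
      = S + (((h:ℂ)*Complex.I) • T + (((h:ℂ)*Complex.I)*((h:ℂ)*Complex.I)) • U) :=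
    fun h => hMlem A E h
  have hdetS : S.det ≠ 0 := by
    have e : S = Complex.ofRealHom.mapMatrix (Aᵀ*A) := rfl
    rw [e, ← RingHom.map_det]
    simpa using isUnit_iff_ne_zero.mp hSd
  have hdetc : Continuous (fun h : ℝ =>
      (S + (((h:ℂ)*Complex.I) • T + (((h:ℂ)*Complex.I)*((h:ℂ)*Complex.I)) • U)).det) := by
    simp only [Matrix.det_apply']
    refine continuous_finset_sum _ fun σ _ => Continuous.mul continuous_const ?_
    refine continuous_finset_prod _ fun i _ => ?_
    simp only [Matrix.add_apply, Matrix.smul_apply, smul_eq_mul]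
    fun_prop
  have hdet_t : Filter.Tendsto (fun h : ℝ => ((csStep A E h)ᵀ * csStep A E h).det)
      (nhds 0) (nhds S.det) := by
    have he : (fun h : ℝ => ((csStep A E h)ᵀ * csStep A E h).det)
        = fun h : ℝ => (S + (((h:ℂ)*Complex.I) • T
            + (((h:ℂ)*Complex.I)*((h:ℂ)*Complex.I)) • U)).det := by
      funext h; rw [hM h]
    rw [he]
    have h0 := hdetc.tendsto 0
    simpa using h0
  have hev : ∀ᶠ h : ℝ in nhds 0, IsUnit ((csStep A E h)ᵀ * csStep A E h) := by
    filter_upwards [hdet_t.eventually_ne hdetS] with h hne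
    exact (Matrix.isUnit_iff_isUnit_det _).mpr (isUnit_iff_ne_zero.mpr hne)
  have hNO : (fun h : ℝ => ((csStep A E h)ᵀ * csStep A E h)⁻¹) =O[nhds 0]
      (fun _ => (1:ℝ)) := invO hJS hM hev
  have hGO : (fun h : ℝ => Gaux Ac Ec T U J ((csStep A E h)ᵀ * csStep A E h)⁻¹
      ((h:ℂ)*Complex.I)) =O[nhds 0] (fun _ => (1:ℝ)) := Gaux_O Ac Ec T U J hNO
  have hkey : ∀ᶠ h : ℝ in nhds 0,
      (2:ℂ)⁻¹ • (csStep A E h * (1 + ((csStep A E h)ᵀ * csStep A E h)⁻¹))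
        = (2:ℂ)⁻¹ • (Ac * (1 + J))
          + ((h:ℂ)*Complex.I) • ((2:ℂ)⁻¹ • (Ec * (1 + J) - Ac * (J*T*J)))
          + (((h:ℂ)*Complex.I)*((h:ℂ)*Complex.I)) •
              ((2:ℂ)⁻¹ • (Ac * (J*T*J*T*J) - Ac * (J*U*J) - Ec * (J*T*J)))
          + (((h:ℂ)*Complex.I)*((h:ℂ)*Complex.I)*((h:ℂ)*Complex.I)) •
              Gaux Ac Ec T U J ((csStep A E h)ᵀ * csStep A E h)⁻¹ ((h:ℂ)*Complex.I) := by
    filter_upwards [hev] with h hu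
    have hMN : (S + (((h:ℂ)*Complex.I) • T + (((h:ℂ)*Complex.I)*((h:ℂ)*Complex.I)) • U))
        * ((csStep A E h)ᵀ * csStep A E h)⁻¹ = 1 := by
      rw [← hM h]
      exact Matrix.mul_nonsing_inv _ ((Matrix.isUnit_iff_isUnit_det _).mp hu)
    have hcs : csStep A E h = Ac + ((h:ℂ)*Complex.I) • Ec := rfl
    rw [hcs] at hMN ⊢
    exact expand_key Ac Ec S T U J _ _ hJS hMN
  have hb0 : ((2:ℝ)⁻¹ • (A * (1 + (Aᵀ * A)⁻¹))).map Complex.ofReal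
      = (2:ℂ)⁻¹ • (Ac * (1 + J)) := by
    simp only [hAc, hJ, mapSmul, mapMul, mapAdd, mapOne, Complex.ofReal_inv,
      Complex.ofReal_ofNat]
  have hb1 : ((2:ℝ)⁻¹ • (E * (1 + (Aᵀ * A)⁻¹)
        - A * (Aᵀ * A)⁻¹ * (Aᵀ * E + Eᵀ * A) * (Aᵀ * A)⁻¹)).map Complex.ofReal
      = (2:ℂ)⁻¹ • (Ec * (1 + J) - Ac * (J*T*J)) := by
    simp only [hAc, hEc, hT, hJ, mapSmul, mapSub, mapMul, mapAdd, mapOne,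
      Complex.ofReal_inv, Complex.ofReal_ofNat, Matrix.mul_assoc]
  set B₂ : Matrix (Fin m) (Fin n) ℝ := (2:ℝ)⁻¹ •
      (A * ((Aᵀ*A)⁻¹*((Aᵀ*E+Eᵀ*A)*((Aᵀ*A)⁻¹*((Aᵀ*E+Eᵀ*A)*(Aᵀ*A)⁻¹))))
        - A * ((Aᵀ*A)⁻¹*((Eᵀ*E)*(Aᵀ*A)⁻¹))
        - E * ((Aᵀ*A)⁻¹*((Aᵀ*E+Eᵀ*A)*(Aᵀ*A)⁻¹))) with hB₂
  have hb2 : B₂.map Complex.ofReal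
      = (2:ℂ)⁻¹ • (Ac * (J*T*J*T*J) - Ac * (J*U*J) - Ec * (J*T*J)) := by
    simp only [hB₂, hAc, hEc, hT, hU, hJ, mapSmul, mapSub, mapMul, mapAdd,
      Complex.ofReal_inv, Complex.ofReal_ofNat, Matrix.mul_assoc]
  refine ⟨hev, ?_, ?_⟩
  · -- real part
    have heqre : (fun h : ℝ =>
          (((2 : ℂ)⁻¹ • (csStep A E h * (1 + ((csStep A E h)ᵀ * csStep A E h)⁻¹))).map
              Complex.re)
            - (2 : ℝ)⁻¹ • (A * (1 + (Aᵀ * A)⁻¹)))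
        =ᶠ[nhds 0] (fun h : ℝ => (-(h^2)) • B₂
            + h^3 • ((Gaux Ac Ec T U J ((csStep A E h)ᵀ * csStep A E h)⁻¹
                ((h:ℂ)*Complex.I)).map Complex.im)) := by
      filter_upwards [hkey] with h hk
      rw [hk, ← hb0, ← hb1, ← hb2]
      ext i j
      simp only [Matrix.map_apply, Matrix.sub_apply, Matrix.add_apply, Matrix.smul_apply,
        smul_eq_mul, Complex.add_re, Complex.mul_re, Complex.mul_im, Complex.add_im,
        Complex.I_re, Complex.I_im, Complex.ofReal_re, Complex.ofReal_im, Complex.sub_re,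
        Complex.sub_im]
      ring
    refine heqre.trans_isBigO ?_
    have t1 : (fun h : ℝ => (-(h^2)) • B₂) =O[nhds 0] (fun h : ℝ => h^2) := by
      apply IsBigO.of_bound ‖B₂‖
      filter_upwards with h
      rw [norm_smul]
      simp only [Real.norm_eq_abs, abs_neg, abs_pow]
      exact le_of_eq (mul_comm _ _)
    have t2 : (fun h : ℝ => h^3 • ((Gaux Ac Ec T U J ((csStep A E h)ᵀ * csStep A E h)⁻¹
        ((h:ℂ)*Complex.I)).map Complex.im)) =O[nhds 0] (fun h : ℝ => h^3) :=
      smulRO (mapImO hGO)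
    exact t1.add (t2.trans pow32O)
  · -- imaginary part
    have heqim : (fun h : ℝ =>
          (((2 : ℂ)⁻¹ • (csStep A E h * (1 + ((csStep A E h)ᵀ * csStep A E h)⁻¹))).map
              Complex.im)
            - h • ((2 : ℝ)⁻¹ •
              (E * (1 + (Aᵀ * A)⁻¹)
                - A * (Aᵀ * A)⁻¹ * (Aᵀ * E + Eᵀ * A) * (Aᵀ * A)⁻¹)))
        =ᶠ[nhds 0] (fun h : ℝ => (-(h^3)) • ((Gaux Ac Ec T U J
            ((csStep A E h)ᵀ * csStep A E h)⁻¹ ((h:ℂ)*Complex.I)).map Complex.re)) := by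
      filter_upwards [hkey] with h hk
      rw [hk, ← hb0, ← hb1, ← hb2]
      ext i j
      simp only [Matrix.map_apply, Matrix.sub_apply, Matrix.add_apply, Matrix.smul_apply,
        smul_eq_mul, Complex.add_re, Complex.mul_re, Complex.mul_im, Complex.add_im,
        Complex.I_re, Complex.I_im, Complex.ofReal_re, Complex.ofReal_im, Complex.sub_re,
        Complex.sub_im]
      ring
    refine heqim.trans_isBigO ?_
    exact (smulRO (mapReO hGO)).trans ((isBigO_refl (fun h : ℝ => h^3) _).neg_left)
end
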